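/- arXiv:0811.1574 — 8 statements merged into one kernel-verified Lean document; each statement's English description precedes it below -/
import Mathlib

section
/- Let S be a finite monoid and let e, f ∈ S be idempotents generating the same two-sided ideal, i.e., SeS = SfS. Then there is a monoid isomorphism between e·S·e and f·S·f (with multiplication inherited from S and identities e and f, respectively); in particular, the maximal subgroups G_e and G_f (the groups of units of e·S·e and f·S·f) are isomorphic groups. -/
/-!
Write `e = u f v` and `f = p e q`, and put `a = e u f`, `b = f v e`. Then `a b = e`, while `b a`
is an idempotent of the corner `fSf` with `f = (p a) (b a) (b q)`. The corner of a finite monoid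
is a finite, hence Dedekind-finite, monoid, and this forces `b a = f`. Conjugation `x ↦ b x a`
is then a multiplicative bijection `eSe → fSf` with inverse `y ↦ a y b`, so it also matches the
groups of units.
-/

open Subsemigroup

namespace IsIdempotentElem

variable {M : Type*} [Monoid M] {e : M}

instance (he : IsIdempotentElem e) : Monoid he.Corner where
  __ : Semigroup he.Corner := inferInstanceAs <| Semigroup (corner e)
  one := ⟨e, e, by simp_rw [he.eq]⟩
  one_mul r := Subtype.ext ((mem_corner_iff he).mp r.2).1
  mul_one r := Subtype.ext ((mem_corner_iff he).mp r.2).2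

instance [Finite M] (he : IsIdempotentElem e) : Finite he.Corner :=
  inferInstanceAs <| Finite (corner e)

theorem mul_eq_symm_of_mem_corner [Finite M] (he : IsIdempotentElem e) {u w : M}
    (hu : u ∈ corner e) (hw : w ∈ corner e) (huw : u * w = e) : w * u = e :=
  congrArg Subtype.val <|
    mul_eq_one_symm (M := he.Corner) (a := ⟨u, hu⟩) (b := ⟨w, hw⟩) (Subtype.ext huw)

theorem eq_of_mem_corner_of_eq_mul_mul [Finite M] (he : IsIdempotentElem e) {g x y : M}
    (hg : IsIdempotentElem g) (hgc : g ∈ corner e) (hegx : e = x * g * y) : g = e := by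
  obtain ⟨heg, hge⟩ := (mem_corner_iff he).mp hgc
  have hu : e * x * g ∈ corner e :=
    (mem_corner_iff he).mpr ⟨by rw [← mul_assoc, ← mul_assoc, he.eq], by rw [mul_assoc, hge]⟩
  have hw : g * y * e ∈ corner e :=
    (mem_corner_iff he).mpr ⟨by rw [← mul_assoc, ← mul_assoc, heg], by rw [mul_assoc, he.eq]⟩
  have huw : e * x * g * (g * y * e) = e := by
    calc e * x * g * (g * y * e) = e * (x * (g * g) * y) * e := by simp only [mul_assoc]
      _ = e := by rw [hg.eq, ← hegx, he.eq, he.eq]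
  have hwu := mul_eq_symm_of_mem_corner he hu hw huw
  calc g = g * (g * y * e * (e * x * g)) := by rw [hwu, hge]
    _ = g * y * e * (e * x * g) := by simp only [← mul_assoc, hg.eq]
    _ = e := hwu

theorem exists_mul_eq_of_eq_mul_mul [Finite M] {f : M} (he : IsIdempotentElem e)
    (hf : IsIdempotentElem f) (hef : ∃ u v, e = u * f * v) (hfe : ∃ p q, f = p * e * q) :
    ∃ a b : M, a * b * a = a ∧ b * a * b = b ∧ a * b = e ∧ b * a = f := by
  obtain ⟨u, v, huv⟩ := hef
  obtain ⟨p, q, hpq⟩ := hfe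
  set a := e * u * f
  set b := f * v * e
  have hab : a * b = e := by
    calc a * b = e * (u * (f * f) * v) * e := by simp only [a, b, mul_assoc]
      _ = e := by rw [hf.eq, ← huv, he.eq, he.eq]
  have hea : e * a = a := by rw [← mul_assoc, ← mul_assoc, he.eq]
  have hbe : b * e = b := by rw [mul_assoc, he.eq]
  have hfb : f * b = b := by rw [← mul_assoc, ← mul_assoc, hf.eq]
  have haf : a * f = a := by rw [mul_assoc, hf.eq]
  have hba : IsIdempotentElem (b * a) := by
    rw [IsIdempotentElem, mul_assoc, ← mul_assoc a, hab, hea]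
  have hbaf : b * a ∈ corner f :=
    (mem_corner_iff hf).mpr ⟨by rw [← mul_assoc, hfb], by rw [mul_assoc, haf]⟩
  have hf_eq : f = p * a * (b * a) * (b * q) := by
    calc f = p * (e * e) * q := by rw [he.eq, hpq]
      _ = p * a * (b * a) * (b * q) := by rw [← hab]; simp only [mul_assoc]
  refine ⟨a, b, by rw [hab, hea], by rw [mul_assoc, hab, hbe], hab, ?_⟩
  exact eq_of_mem_corner_of_eq_mul_mul hf hba hbaf hf_eq

end IsIdempotentElem

namespace Subsemigroup

variable {M : Type*} [Monoid M] {a b : M}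

theorem _root_.IsIdempotentElem.mul_of_mul_mul_self (ha : a * b * a = a) :
    IsIdempotentElem (a * b) := by
  rw [IsIdempotentElem, ← mul_assoc, ha]

theorem conj_mem_corner (ha : a * b * a = a) (hb : b * a * b = b) (x : M) :
    b * x * a ∈ corner (b * a) :=
  ⟨b * x * a, by simp only [← mul_assoc, hb]; simp only [mul_assoc, ha]⟩

theorem conj_conj_of_mem_corner (ha : a * b * a = a) {x : M} (hx : x ∈ corner (a * b)) :
    a * (b * x * a) * b = x := by
  obtain ⟨hxl, hxr⟩ := (mem_corner_iff (IsIdempotentElem.mul_of_mul_mul_self ha)).mp hx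
  calc a * (b * x * a) * b = a * b * x * (a * b) := by simp only [mul_assoc]
    _ = x := by rw [hxl, hxr]

theorem conj_mul_of_mem_corner (ha : a * b * a = a) {x : M} (hx : x ∈ corner (a * b)) (y : M) :
    b * (x * y) * a = b * x * a * (b * y * a) := by
  have hxr := ((mem_corner_iff (IsIdempotentElem.mul_of_mul_mul_self ha)).mp hx).2
  calc b * (x * y) * a = b * (x * (a * b) * y) * a := by rw [hxr]
    _ = b * x * a * (b * y * a) := by simp only [mul_assoc]

theorem conj_mul_self (hb : b * a * b = b) : b * (a * b) * a = b * a := by rw [← mul_assoc, hb]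

theorem invOn_conj_corner (ha : a * b * a = a) (hb : b * a * b = b) :
    Set.InvOn (a * · * b) (b * · * a) (corner (a * b)) (corner (b * a)) :=
  ⟨fun _ hx ↦ conj_conj_of_mem_corner ha hx, fun _ hy ↦ conj_conj_of_mem_corner hb hy⟩

theorem bijOn_conj_corner (ha : a * b * a = a) (hb : b * a * b = b) :
    Set.BijOn (b * · * a) (corner (a * b)) (corner (b * a)) :=
  (invOn_conj_corner ha hb).bijOn (fun x _ ↦ conj_mem_corner ha hb x)
    (fun y _ ↦ conj_mem_corner hb ha y)

/-- The group of units of the corner monoid `eSe`, i.e. the maximal subgroup `G_e`. -/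
def maximalSubgroup (e : M) : Set M :=
  {x | x ∈ corner e ∧ ∃ y ∈ corner e, x * y = e ∧ y * x = e}

theorem maximalSubgroup_subset_corner (e : M) : maximalSubgroup e ⊆ corner e := fun _ hx ↦ hx.1

theorem conj_mem_maximalSubgroup (ha : a * b * a = a) (hb : b * a * b = b) {x : M}
    (hx : x ∈ maximalSubgroup (a * b)) : b * x * a ∈ maximalSubgroup (b * a) := by
  obtain ⟨hxc, y, hyc, hxy, hyx⟩ := hx
  refine ⟨conj_mem_corner ha hb x, b * y * a, conj_mem_corner ha hb y, ?_, ?_⟩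
  · rw [← conj_mul_of_mem_corner ha hxc, hxy, conj_mul_self hb]
  · rw [← conj_mul_of_mem_corner ha hyc, hyx, conj_mul_self hb]

theorem bijOn_conj_maximalSubgroup (ha : a * b * a = a) (hb : b * a * b = b) :
    Set.BijOn (b * · * a) (maximalSubgroup (a * b)) (maximalSubgroup (b * a)) :=
  ((invOn_conj_corner ha hb).mono (maximalSubgroup_subset_corner _)
    (maximalSubgroup_subset_corner _)).bijOn (fun _ hx ↦ conj_mem_maximalSubgroup ha hb hx)
    (fun _ hy ↦ conj_mem_maximalSubgroup hb ha hy)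

end Subsemigroup

/-- If `e, f` are idempotents of a finite monoid `S` with `SeS = SfS`,
then there is a monoid isomorphism `eSe ≅ fSf` (a bijection preserving multiplication and
sending the identity `e` to the identity `f`); in particular it restricts to an isomorphism
of the maximal subgroups `G_e` and `G_f` (the groups of units of `eSe` and `fSf`). -/
theorem stmt0 (S : Type*) [Monoid S] [Finite S] (e f : S)
    (he : e * e = e) (hf : f * f = f)
    (hJ : {x : S | ∃ u v : S, x = u * e * v} = {x : S | ∃ u v : S, x = u * f * v}) :
    ∃ φ : S → S,
      Set.BijOn φ {x : S | ∃ s : S, x = e * s * e} {x : S | ∃ s : S, x = f * s * f} ∧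
      (∀ x ∈ {x : S | ∃ s : S, x = e * s * e}, ∀ y ∈ {x : S | ∃ s : S, x = e * s * e},
        φ (x * y) = φ x * φ y) ∧
      φ e = f ∧
      Set.BijOn φ
        {x : S | (∃ s : S, x = e * s * e) ∧
          ∃ y : S, (∃ s : S, y = e * s * e) ∧ x * y = e ∧ y * x = e}
        {x : S | (∃ s : S, x = f * s * f) ∧
          ∃ y : S, (∃ s : S, y = f * s * f) ∧ x * y = f ∧ y * x = f} := by
  have hef : e ∈ {x : S | ∃ u v : S, x = u * f * v} := hJ ▸ ⟨1, 1, by simp⟩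
  have hfe : f ∈ {x : S | ∃ u v : S, x = u * e * v} := hJ ▸ ⟨1, 1, by simp⟩
  obtain ⟨a, b, ha, hb, rfl, rfl⟩ := IsIdempotentElem.exists_mul_eq_of_eq_mul_mul he hf hef hfe
  have hcorner (x g : S) : (∃ s, x = g * s * g) ↔ x ∈ corner g := by
    simp only [corner, Subsemigroup.mem_mk, Set.mem_range, eq_comm]
  simp only [hcorner]
  exact ⟨(b * · * a), bijOn_conj_corner ha hb, fun x hx y _ ↦ conj_mul_of_mem_corner ha hx y,
    conj_mul_self hb, bijOn_conj_maximalSubgroup ha hb⟩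
end

section
/- Let S be a finite monoid and let s, x ∈ S. Then S(sx)S = SsS if and only if (sx)S = sS, and S(xs)S = SsS if and only if S(xs) = Ss. (Stability: an element J-equivalent to s of the form sx is R-equivalent to s, and one of the form xs is L-equivalent to s.) -/
/-!
If `s = u s t` then `s = uⁿ s tⁿ` for every `n`. In a finite monoid some power of `t` repeats,
`t^(a+d) = t^a` with `d > 0`, and then `s t^d = u^a s t^(a+d) = u^a s t^a = s`; hence
`s ∈ s t M`, and dually `s ∈ M u s`. Applied to `s = u (s x) v` this puts `s` in `(s x) M`,
and to `s = u (x s) v` it puts `s` in `M (x s)`; the other implications hold in every monoid.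
-/

section PrincipalIdeals

variable {M : Type*} [Monoid M]

def principalRightIdeal (a : M) : Set M := {y | ∃ u, y = a * u}

def principalLeftIdeal (a : M) : Set M := {y | ∃ u, y = u * a}

def principalTwoSidedIdeal (a : M) : Set M := {y | ∃ u v, y = u * a * v}

lemma principalRightIdeal_subset_iff {a b : M} :
    principalRightIdeal a ⊆ principalRightIdeal b ↔ a ∈ principalRightIdeal b := by
  refine ⟨fun h => h ⟨1, (mul_one a).symm⟩, ?_⟩
  rintro ⟨c, rfl⟩ _ ⟨u, rfl⟩
  exact ⟨c * u, mul_assoc b c u⟩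

lemma principalLeftIdeal_subset_iff {a b : M} :
    principalLeftIdeal a ⊆ principalLeftIdeal b ↔ a ∈ principalLeftIdeal b := by
  refine ⟨fun h => h ⟨1, (one_mul a).symm⟩, ?_⟩
  rintro ⟨c, rfl⟩ _ ⟨u, rfl⟩
  exact ⟨u * c, (mul_assoc u c b).symm⟩

lemma principalTwoSidedIdeal_subset_iff {a b : M} :
    principalTwoSidedIdeal a ⊆ principalTwoSidedIdeal b ↔ a ∈ principalTwoSidedIdeal b := by
  refine ⟨fun h => h ⟨1, 1, by simp⟩, ?_⟩
  rintro ⟨c, d, rfl⟩ _ ⟨u, v, rfl⟩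
  exact ⟨u * c, d * v, by simp only [mul_assoc]⟩

lemma principalRightIdeal_mul_subset (a b : M) :
    principalRightIdeal (a * b) ⊆ principalRightIdeal a :=
  principalRightIdeal_subset_iff.2 ⟨b, rfl⟩

lemma principalLeftIdeal_mul_subset (a b : M) :
    principalLeftIdeal (a * b) ⊆ principalLeftIdeal b :=
  principalLeftIdeal_subset_iff.2 ⟨a, rfl⟩

lemma principalTwoSidedIdeal_mul_subset_left (a b : M) :
    principalTwoSidedIdeal (a * b) ⊆ principalTwoSidedIdeal a :=
  principalTwoSidedIdeal_subset_iff.2 ⟨1, b, by simp⟩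

lemma principalTwoSidedIdeal_mul_subset_right (a b : M) :
    principalTwoSidedIdeal (a * b) ⊆ principalTwoSidedIdeal b :=
  principalTwoSidedIdeal_subset_iff.2 ⟨a, 1, by simp⟩

lemma principalRightIdeal_subset_principalTwoSidedIdeal (a : M) :
    principalRightIdeal a ⊆ principalTwoSidedIdeal a := by
  rintro _ ⟨u, rfl⟩
  exact ⟨1, u, by simp⟩

lemma principalLeftIdeal_subset_principalTwoSidedIdeal (a : M) :
    principalLeftIdeal a ⊆ principalTwoSidedIdeal a := by
  rintro _ ⟨u, rfl⟩
  exact ⟨u, 1, by simp⟩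

lemma exists_pow_add_eq_pow [Finite M] (t : M) : ∃ a d : ℕ, 0 < d ∧ t ^ (a + d) = t ^ a := by
  obtain ⟨a, b, hab, h⟩ := Finite.exists_ne_map_eq_of_infinite (fun n : ℕ => t ^ n)
  rcases Nat.lt_or_gt_of_ne hab with hlt | hlt
  · exact ⟨a, b - a, Nat.sub_pos_of_lt hlt, by rw [Nat.add_sub_cancel' hlt.le]; exact h.symm⟩
  · exact ⟨b, a - b, Nat.sub_pos_of_lt hlt, by rw [Nat.add_sub_cancel' hlt.le]; exact h⟩

lemma eq_pow_mul_mul_pow_of_eq_mul_mul {s u t : M} (h : s = u * s * t) (n : ℕ) :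
    s = u ^ n * s * t ^ n := by
  induction n with
  | zero => simp
  | succ n ih =>
    calc s = u ^ n * (u * s * t) * t ^ n := by rw [← h, ← ih]
      _ = u ^ (n + 1) * s * t ^ (n + 1) := by
          rw [pow_succ, pow_succ']; simp only [mul_assoc]

lemma exists_eq_self_mul_mul_of_eq_mul_self_mul [Finite M] {s u t : M} (h : s = u * s * t) :
    ∃ w, s = s * t * w := by
  obtain ⟨a, d, hd, ht⟩ := exists_pow_add_eq_pow t
  have hs : s * t ^ d = s := by
    calc s * t ^ d = u ^ a * s * t ^ (a + d) := by
          rw [pow_add, ← mul_assoc, ← eq_pow_mul_mul_pow_of_eq_mul_mul h]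
      _ = s := by rw [ht, ← eq_pow_mul_mul_pow_of_eq_mul_mul h]
  refine ⟨t ^ (d - 1), ?_⟩
  rw [mul_assoc, ← pow_succ', Nat.sub_add_cancel hd, hs]

lemma exists_eq_mul_mul_self_of_eq_mul_self_mul [Finite M] {s u t : M} (h : s = u * s * t) :
    ∃ w, s = w * u * s := by
  obtain ⟨a, d, hd, hu⟩ := exists_pow_add_eq_pow u
  have hs : u ^ d * s = s := by
    calc u ^ d * s = u ^ (a + d) * s * t ^ a := by
          rw [add_comm, pow_add, mul_assoc, mul_assoc, ← mul_assoc _ s,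
            ← eq_pow_mul_mul_pow_of_eq_mul_mul h]
      _ = s := by rw [hu, ← eq_pow_mul_mul_pow_of_eq_mul_mul h]
  refine ⟨u ^ (d - 1), ?_⟩
  rw [← pow_succ, Nat.sub_add_cancel hd, hs]

lemma mem_principalRightIdeal_of_mem_principalTwoSidedIdeal_mul [Finite M] {s x : M}
    (h : s ∈ principalTwoSidedIdeal (s * x)) : s ∈ principalRightIdeal (s * x) := by
  obtain ⟨u, v, huv⟩ := h
  obtain ⟨w, hw⟩ := exists_eq_self_mul_mul_of_eq_mul_self_mul (u := u) (t := x * v)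
    (huv.trans (by simp only [mul_assoc]))
  exact ⟨v * w, hw.trans (by simp only [mul_assoc])⟩

lemma mem_principalLeftIdeal_of_mem_principalTwoSidedIdeal_mul [Finite M] {s x : M}
    (h : s ∈ principalTwoSidedIdeal (x * s)) : s ∈ principalLeftIdeal (x * s) := by
  obtain ⟨u, v, huv⟩ := h
  obtain ⟨w, hw⟩ := exists_eq_mul_mul_self_of_eq_mul_self_mul (u := u * x) (t := v)
    (huv.trans (by simp only [mul_assoc]))
  exact ⟨w * u, hw.trans (by simp only [mul_assoc])⟩

end PrincipalIdeals

/-- stability in finite monoids: for `s, x` in a finite monoid `S`,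
`S(sx)S = SsS ↔ (sx)S = sS` and `S(xs)S = SsS ↔ S(xs) = Ss`. -/
theorem stmt1 (S : Type*) [Monoid S] [Finite S] (s x : S) :
    ({y : S | ∃ u v : S, y = u * (s * x) * v} = {y : S | ∃ u v : S, y = u * s * v} ↔
      {y : S | ∃ u : S, y = (s * x) * u} = {y : S | ∃ u : S, y = s * u}) ∧
    ({y : S | ∃ u v : S, y = u * (x * s) * v} = {y : S | ∃ u v : S, y = u * s * v} ↔
      {y : S | ∃ u : S, y = u * (x * s)} = {y : S | ∃ u : S, y = u * s}) := by
  constructor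
  · change principalTwoSidedIdeal (s * x) = principalTwoSidedIdeal s ↔
      principalRightIdeal (s * x) = principalRightIdeal s
    rw [subset_antisymm_iff, subset_antisymm_iff,
      and_iff_right (principalTwoSidedIdeal_mul_subset_left s x),
      and_iff_right (principalRightIdeal_mul_subset s x),
      principalTwoSidedIdeal_subset_iff, principalRightIdeal_subset_iff]
    exact ⟨mem_principalRightIdeal_of_mem_principalTwoSidedIdeal_mul,
      fun h => principalRightIdeal_subset_principalTwoSidedIdeal _ h⟩
  · change principalTwoSidedIdeal (x * s) = principalTwoSidedIdeal s ↔
      principalLeftIdeal (x * s) = principalLeftIdeal s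
    rw [subset_antisymm_iff, subset_antisymm_iff,
      and_iff_right (principalTwoSidedIdeal_mul_subset_right x s),
      and_iff_right (principalLeftIdeal_mul_subset x s),
      principalTwoSidedIdeal_subset_iff, principalLeftIdeal_subset_iff]
    exact ⟨mem_principalLeftIdeal_of_mem_principalTwoSidedIdeal_mul,
      fun h => principalLeftIdeal_subset_principalTwoSidedIdeal _ h⟩
end

section
/- Let k be a field, A an associative unital k-algebra, e ∈ A an idempotent, and B a unital subalgebra of e·A·e whose identity element is e. Let M be a right B-module and N a right A-module. If Ae = {a·e : a ∈ A} is projective as a right B-module, then for every n ≥ 0 there is an isomorphism Ext^n_A(N, Hom_B(Ae, M)) ≅ Ext^n_B(N·e, M), where Hom_B(Ae, M) is a right A-module via (φ·a)(x) = φ(a·x) and N·e is a right B-module via the B-action inherited from A. -/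
open CategoryTheory MulOpposite ModuleCat

section Infra

variable (k : Type) [Field k] (A : Type) [Ring A] [Algebra k A]
variable (B : Type) [Ring B] [Algebra k B]

/-- The right ideal `eA`, as a `k`-subspace of `A`. -/
noncomputable def eASub (e : A) : Submodule k A := LinearMap.range (LinearMap.mulLeft k e)

/-- The left ideal `Ae`, as a `k`-subspace of `A`. -/
noncomputable def AeSub (e : A) : Submodule k A := LinearMap.range (LinearMap.mulRight k e)

/-- The subspace `N·ε` of a right `A`-module `N`. -/
noncomputable def NeSub (e : A) (N : ModuleCat Aᵐᵒᵖ) : Submodule k N :=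
  Submodule.span k {v : N | ∃ w : N, v = op e • w}

variable {k A B}

theorem op_smul_comm_k (W : ModuleCat Aᵐᵒᵖ) (r : Aᵐᵒᵖ) (c : k) (v : W) :
    r • (c • v) = c • (r • v) := by
  rw [algebra_compatible_smul Aᵐᵒᵖ c v, algebra_compatible_smul Aᵐᵒᵖ c (r • v),
    smul_smul, smul_smul, Algebra.commutes]

theorem smul_e_mem_NeSub {e : A} (a : A) (N : ModuleCat Aᵐᵒᵖ) (v : N) :
    op (a * e) • v ∈ NeSub k A e N := by
  apply Submodule.subset_span
  exact ⟨op a • v, by rw [smul_smul, ← op_mul]⟩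

theorem e_smul_of_mem_NeSub {e : A} (he : e * e = e) (N : ModuleCat Aᵐᵒᵖ) {v : N}
    (hv : v ∈ NeSub k A e N) : op e • v = v := by
  induction hv using Submodule.span_induction with
  | mem w hw => obtain ⟨m, rfl⟩ := hw; rw [smul_smul, ← op_mul, he]
  | zero => rw [smul_zero]
  | add a b _ _ ha hb => rw [smul_add, ha, hb]
  | smul c a _ ha => rw [op_smul_comm_k, ha]

variable (e : A) (he : e * e = e) (ι : B →ₗ[k] A)

theorem iota_mem_corner (hmul : ∀ x y : B, ι (x * y) = ι x * ι y) (hone : ι 1 = e)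
    (b : B) : ι b = e * ι b ∧ ι b = ι b * e := by
  constructor
  · rw [← hone, ← hmul, one_mul]
  · rw [← hone, ← hmul, mul_one]

variable (hmul : ∀ x y : B, ι (x * y) = ι x * ι y) (hone : ι 1 = e)

/-- The right `B`-action on `N·e`, as a ring homomorphism `Bᵐᵒᵖ → End(N·e)`. -/
noncomputable def NeHom (N : ModuleCat Aᵐᵒᵖ) : Bᵐᵒᵖ →+* Module.End k ↥(NeSub k A e N) where
  toFun b :=
    { toFun := fun v => ⟨op (ι (unop b)) • v.1, by
        rw [(iota_mem_corner e ι hmul hone (unop b)).2]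
        exact smul_e_mem_NeSub _ N v.1⟩
      map_add' := fun x y => Subtype.ext (by
        show op _ • ((x : N) + (y : N)) = op _ • (x : N) + op _ • (y : N)
        rw [smul_add])
      map_smul' := fun c x => Subtype.ext (by
        show op _ • ((c • x : ↥(NeSub k A e N)) : N) = c • (op _ • (x : N))
        rw [Submodule.coe_smul, op_smul_comm_k]) }
  map_one' := by
    ext v
    show op (ι 1) • (v : N) = (v : N)
    rw [hone]
    exact e_smul_of_mem_NeSub he N v.2
  map_mul' x y := by
    ext v
    show op (ι (unop y * unop x)) • (v : N)
      = op (ι (unop x)) • (op (ι (unop y)) • (v : N))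
    rw [hmul, smul_smul, ← op_mul]
  map_zero' := by
    ext v
    show op (ι 0) • (v : N) = 0
    rw [map_zero, op_zero, zero_smul]
  map_add' x y := by
    ext v
    show op (ι (unop x + unop y)) • (v : N)
      = op (ι (unop x)) • (v : N) + op (ι (unop y)) • (v : N)
    rw [map_add, MulOpposite.op_add, add_smul]

/-- The right `B`-module structure on `N·e` (restriction along `B ⊆ eAe`). -/
noncomputable def NeModule (N : ModuleCat Aᵐᵒᵖ) : Module Bᵐᵒᵖ ↥(NeSub k A e N) :=
  Module.compHom _ (NeHom e he ι hmul hone N)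

end Infra

section Ae

variable {k : Type} [Field k] {A : Type} [Ring A] [Algebra k A]
variable {B : Type} [Ring B] [Algebra k B]
variable (e : A) (he : e * e = e) (ι : B →ₗ[k] A)
variable (hmul : ∀ x y : B, ι (x * y) = ι x * ι y) (hone : ι 1 = e)

/-- The right `B`-action on `Ae`, as a ring homomorphism `Bᵐᵒᵖ → End(Ae)`. -/
noncomputable def AeHom : Bᵐᵒᵖ →+* Module.End k ↥(AeSub k A e) where
  toFun b :=
    { toFun := fun x => ⟨(x : A) * ι (unop b), by
        refine ⟨(x : A) * ι (unop b), ?_⟩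
        show ((x : A) * ι (unop b)) * e = (x : A) * ι (unop b)
        rw [mul_assoc, ← (iota_mem_corner e ι hmul hone (unop b)).2]⟩
      map_add' := fun x y => Subtype.ext (by
        show ((x : A) + (y : A)) * ι (unop b) = (x : A) * ι (unop b) + (y : A) * ι (unop b)
        rw [add_mul])
      map_smul' := fun c x => Subtype.ext (by
        show (c • (x : A)) * ι (unop b) = c • ((x : A) * ι (unop b))
        rw [smul_mul_assoc]) }
  map_one' := by
    ext x
    show (x : A) * ι 1 = (x : A)
    obtain ⟨c, hc⟩ := x.2
    rw [hone, ← hc]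
    show (LinearMap.mulRight k e c : A) * e = LinearMap.mulRight k e c
    show (c * e) * e = c * e
    rw [mul_assoc, he]
  map_mul' x y := by
    ext v
    show (v : A) * ι (unop y * unop x) = ((v : A) * ι (unop y)) * ι (unop x)
    rw [hmul, mul_assoc]
  map_zero' := by
    ext v
    show (v : A) * ι 0 = 0
    rw [map_zero, mul_zero]
  map_add' x y := by
    ext v
    show (v : A) * ι (unop x + unop y) = (v : A) * ι (unop x) + (v : A) * ι (unop y)
    rw [map_add, mul_add]

/-- The right `B`-module structure on `Ae` (restriction along `B ⊆ eAe`). -/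
noncomputable def AeModule : Module Bᵐᵒᵖ ↥(AeSub k A e) :=
  Module.compHom _ (AeHom e he ι hmul hone)

/-- `SMulCommClass` between the right `B`-action and the `k`-action on a right
`B`-module. -/
def smulCommB (M : ModuleCat Bᵐᵒᵖ) : SMulCommClass Bᵐᵒᵖ k M :=
  ⟨fun r c v => op_smul_comm_k M r c v⟩

/-- Left multiplication by `a : A` on `Ae`, as a map of right `B`-modules. -/
noncomputable def lmulAe (a : A) :
    letI : Module Bᵐᵒᵖ ↥(AeSub k A e) := AeModule e he ι hmul hone
    ↥(AeSub k A e) →ₗ[Bᵐᵒᵖ] ↥(AeSub k A e) :=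
  letI : Module Bᵐᵒᵖ ↥(AeSub k A e) := AeModule e he ι hmul hone
  { toFun := fun x => ⟨a * (x : A), by
      obtain ⟨c, hc⟩ := x.2
      refine ⟨a * c, ?_⟩
      show (a * c) * e = a * (x : A)
      rw [mul_assoc, ← hc, LinearMap.mulRight_apply]⟩
    map_add' := fun x y => Subtype.ext (by
      show a * ((x : A) + (y : A)) = a * (x : A) + a * (y : A)
      rw [mul_add])
    map_smul' := fun b x => Subtype.ext (by
      show a * ((x : A) * ι (unop b)) = (a * (x : A)) * ι (unop b)
      rw [mul_assoc]) }

/-- The right `A`-module structure on `Hom_B(Ae, M)`, given by `(φ·a)(x) = φ(a·x)`. -/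
noncomputable def homAModule (M : ModuleCat Bᵐᵒᵖ) :
    letI : Module Bᵐᵒᵖ ↥(AeSub k A e) := AeModule e he ι hmul hone
    letI : SMulCommClass Bᵐᵒᵖ k M := smulCommB M
    Module Aᵐᵒᵖ (↥(AeSub k A e) →ₗ[Bᵐᵒᵖ] ↥M) :=
  letI : Module Bᵐᵒᵖ ↥(AeSub k A e) := AeModule e he ι hmul hone
  letI : SMulCommClass Bᵐᵒᵖ k M := smulCommB M
  Module.compHom _
    ({ toFun := fun a =>
        { toFun := fun φ => φ.comp (lmulAe e he ι hmul hone (unop a))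
          map_add' := fun φ ψ => LinearMap.add_comp _ _ _
          map_smul' := fun c φ => LinearMap.smul_comp _ _ _ }
       map_one' := by
         ext φ x
         exact congrArg φ (Subtype.ext (one_mul (x : A)))
       map_mul' := fun a b => by
         ext φ x
         exact congrArg φ (Subtype.ext (mul_assoc (unop b) (unop a) (x : A)))
       map_zero' := by
         ext φ x
         show φ ⟨(0 : A) * (x : A), _⟩ = 0
         rw [show (⟨(0 : A) * (x : A), _⟩ : ↥(AeSub k A e))
            = (0 : ↥(AeSub k A e)) from Subtype.ext (zero_mul (x : A)), map_zero]
       map_add' := fun a b => by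
         ext φ x
         show φ ⟨(unop a + unop b) * (x : A), _⟩ = φ ⟨unop a * (x : A), _⟩ + φ ⟨unop b * (x : A), _⟩
         rw [show (⟨(unop a + unop b) * (x : A), _⟩ : ↥(AeSub k A e))
            = (⟨unop a * (x : A), _⟩ : ↥(AeSub k A e)) + ⟨unop b * (x : A), _⟩
            from Subtype.ext (add_mul (unop a) (unop b) (x : A)), map_add]
       } : Aᵐᵒᵖ →+* Module.End k (↥(AeSub k A e) →ₗ[Bᵐᵒᵖ] ↥M))

end Ae

/-!
The functor `N ↦ N·e` from right `A`-modules to right `B`-modules is left adjoint to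
`M ↦ Hom_B(Ae, M)`: a `B`-map `g : N·e → M` corresponds to `v ↦ (x ↦ g (v·x))`, and an
`A`-map `f : N → Hom_B(Ae, M)` to `v ↦ f v e`. The left adjoint is exact, and when `Ae` is
`B`-projective the right adjoint preserves epimorphisms, so `N ↦ N·e` sends projectives to
projectives. It therefore carries a projective resolution `P` of `N` to one of `N·e`, and the
adjunction identifies `Hom_A(P, Hom_B(Ae, M))` with `Hom_B(P·e, M)` as complexes of `k`-modules.
-/

namespace CategoryTheory.Adjunction

universe v u₁ u₂

variable {R : Type v} [Ring R] {C : Type u₁} {D : Type u₂} [Category.{v} C] [Category.{v} D]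

section Preadditive

variable [Preadditive C] [Preadditive D] [Linear R C] [Linear R D]
  {F : C ⥤ D} {G : D ⥤ C} (adj : F ⊣ G)

def homLinearEquiv [F.Additive] [F.Linear R] (X : C) (Y : D) :
    (F.obj X ⟶ Y) ≃ₗ[R] (X ⟶ G.obj Y) :=
  LinearEquiv.symm
  { (adj.homAddEquiv X Y).symm with
    map_smul' r g := by simp [homEquiv_counit, Functor.map_smul] }

end Preadditive

variable [Abelian C] [Abelian D] [Linear R C] [Linear R D]
  {F : C ⥤ D} {G : D ⥤ C} (adj : F ⊣ G) [F.Additive] [F.Linear R] [F.PreservesHomology]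
  [G.PreservesEpimorphisms]

noncomputable def linearYonedaObjMapProjectiveResolutionIso {X : C} (P : ProjectiveResolution X)
    (Y : D) :
    haveI := Functor.preservesProjectiveObjects_of_adjunction_of_preservesEpimorphisms adj
    (F.mapProjectiveResolution P).complex.linearYonedaObj R Y ≅
      P.complex.linearYonedaObj R (G.obj Y) :=
  HomologicalComplex.Hom.isoOfComponents
    (fun i => (adj.homLinearEquiv (R := R) (P.complex.X i) Y).toModuleIso) fun i j _ => by
      refine ModuleCat.hom_ext (LinearMap.ext fun f => ?_)
      exact (adj.homEquiv_naturality_left (P.complex.d j i) f).symm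

noncomputable def extIso [EnoughProjectives C] [EnoughProjectives D] (X : C) (Y : D) (n : ℕ) :
    ((Ext R C n).obj (Opposite.op X)).obj (G.obj Y) ≅
      ((Ext R D n).obj (Opposite.op (F.obj X))).obj Y :=
  haveI := Functor.preservesProjectiveObjects_of_adjunction_of_preservesEpimorphisms adj
  let P : ProjectiveResolution X := (HasProjectiveResolution.out).some
  P.isoExt n (G.obj Y) ≪≫
    (HomologicalComplex.homologyFunctor _ _ n).mapIso
      (adj.linearYonedaObjMapProjectiveResolutionIso P Y).symm ≪≫
    ((F.mapProjectiveResolution P).isoExt n Y).symm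

end CategoryTheory.Adjunction

section Corner

variable {k : Type} [Field k] {A : Type} [Ring A] [Algebra k A]
variable {B : Type} [Ring B] [Algebra k B]

theorem mul_eq_self_of_mem_AeSub {e : A} (he : e * e = e) {x : A} (hx : x ∈ AeSub k A e) :
    x * e = x := by
  obtain ⟨c, rfl⟩ := hx
  simp [mul_assoc, he]

theorem smul_mem_NeSub_of_mem_AeSub {e : A} (N : ModuleCat Aᵐᵒᵖ) (v : N) {x : A}
    (hx : x ∈ AeSub k A e) : op x • v ∈ NeSub k A e N := by
  obtain ⟨c, rfl⟩ := hx
  exact smul_e_mem_NeSub c N v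

theorem map_mem_NeSub {e : A} {X Y : ModuleCat Aᵐᵒᵖ} (f : X ⟶ Y) {v : X}
    (hv : v ∈ NeSub k A e X) : f v ∈ NeSub k A e Y := by
  induction hv using Submodule.span_induction with
  | mem w hw =>
    obtain ⟨m, rfl⟩ := hw
    exact Submodule.subset_span ⟨f m, map_smul f.hom _ _⟩
  | zero => simp
  | add a b _ _ ha hb => simpa using add_mem ha hb
  | smul c a _ ha =>
    rw [algebra_compatible_smul Aᵐᵒᵖ c a, map_smul, ← algebra_compatible_smul]
    exact Submodule.smul_mem _ c ha

theorem iota_algebraMap_smul_of_mem_NeSub {e : A} (he : e * e = e) {ι : B →ₗ[k] A}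
    (hone : ι 1 = e) (N : ModuleCat Aᵐᵒᵖ) (c : k) {v : N}
    (hv : v ∈ NeSub k A e N) : op (ι (algebraMap k B c)) • v = c • v := by
  rw [Algebra.algebraMap_eq_smul_one, map_smul, hone, op_smul, smul_assoc,
    e_smul_of_mem_NeSub he N hv]

variable (e : A) (he : e * e = e) (ι : B →ₗ[k] A)
variable (hmul : ∀ x y : B, ι (x * y) = ι x * ι y) (hone : ι 1 = e)

noncomputable def cornerFunctor : ModuleCat Aᵐᵒᵖ ⥤ ModuleCat Bᵐᵒᵖ where
  obj X :=
    letI := NeModule e he ι hmul hone X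
    ModuleCat.of Bᵐᵒᵖ (NeSub k A e X)
  map {X Y} f :=
    letI := NeModule e he ι hmul hone X
    letI := NeModule e he ι hmul hone Y
    ModuleCat.ofHom
      { toFun v := ⟨f v, map_mem_NeSub f v.2⟩
        map_add' x y := Subtype.ext (map_add f.hom x.1 y.1)
        map_smul' b v := Subtype.ext (map_smul f.hom (op (ι (unop b))) v.1) }

instance : (cornerFunctor e he ι hmul hone).Additive where

instance : (cornerFunctor e he ι hmul hone).Linear k where
  map_smul f c := by
    ext v
    exact Subtype.ext (iota_algebraMap_smul_of_mem_NeSub he hone _ c (map_mem_NeSub f v.2)).symm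

theorem cornerFunctor_preservesHomology : (cornerFunctor e he ι hmul hone).PreservesHomology := by
  apply Functor.preservesHomology_of_map_exact
  intro S hS
  rw [ShortComplex.moduleCat_exact_iff] at hS ⊢
  intro v hv
  obtain ⟨w, hw⟩ := hS v.1 (congrArg Subtype.val hv)
  refine ⟨⟨op e • w, Submodule.subset_span ⟨w, rfl⟩⟩, Subtype.ext ?_⟩
  change S.f (op e • w) = v.1
  rw [map_smul, hw, e_smul_of_mem_NeSub he _ v.2]

noncomputable def coindFunctor : ModuleCat Bᵐᵒᵖ ⥤ ModuleCat Aᵐᵒᵖ :=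
  letI := AeModule e he ι hmul hone
  { obj Y :=
      letI := smulCommB (k := k) Y
      letI := homAModule e he ι hmul hone Y
      ModuleCat.of Aᵐᵒᵖ (AeSub k A e →ₗ[Bᵐᵒᵖ] Y)
    map {Y Z} q :=
      letI := smulCommB (k := k) Y
      letI := smulCommB (k := k) Z
      letI := homAModule e he ι hmul hone Y
      letI := homAModule e he ι hmul hone Z
      ModuleCat.ofHom
        { toFun φ := q.hom ∘ₗ φ
          map_add' φ ψ := LinearMap.comp_add φ ψ q.hom
          map_smul' a φ := rfl } }

noncomputable def idemAe : AeSub k A e := ⟨e, e, he⟩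

theorem coe_smul_AeSub (b : Bᵐᵒᵖ) (x : AeSub k A e) :
    letI := AeModule e he ι hmul hone
    ((b • x : AeSub k A e) : A) = x * ι (unop b) :=
  rfl

theorem coe_smul_NeSub (N : ModuleCat Aᵐᵒᵖ) (b : Bᵐᵒᵖ) (v : NeSub k A e N) :
    letI := NeModule e he ι hmul hone N
    ((b • v : NeSub k A e N) : N) = op (ι (unop b)) • (v : N) :=
  rfl

theorem homAModule_smul_apply (M : ModuleCat Bᵐᵒᵖ) (a : Aᵐᵒᵖ)
    (φ : letI := AeModule e he ι hmul hone; letI := smulCommB (k := k) M; AeSub k A e →ₗ[Bᵐᵒᵖ] M)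
    (x : AeSub k A e) :
    letI := AeModule e he ι hmul hone
    letI := smulCommB (k := k) M
    letI := homAModule e he ι hmul hone M
    (a • φ) x = φ ⟨unop a * x, (lmulAe e he ι hmul hone (unop a) x).2⟩ :=
  rfl

section HomEquiv

variable {X : ModuleCat Aᵐᵒᵖ} {Y : ModuleCat Bᵐᵒᵖ}

noncomputable def coindLift
    (g : letI := NeModule e he ι hmul hone X; NeSub k A e X →ₗ[Bᵐᵒᵖ] Y) (v : X) :
    letI := AeModule e he ι hmul hone
    AeSub k A e →ₗ[Bᵐᵒᵖ] Y :=
  letI := AeModule e he ι hmul hone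
  letI := NeModule e he ι hmul hone X
  { toFun x := g ⟨op x.1 • v, smul_mem_NeSub_of_mem_AeSub X v x.2⟩
    map_add' x y := by
      rw [← map_add]
      exact congrArg g (Subtype.ext (by simp [add_smul]))
    map_smul' b x := by
      rw [← map_smul]
      exact congrArg g (Subtype.ext (by simp [coe_smul_AeSub, coe_smul_NeSub, smul_smul])) }

theorem coindLift_apply
    (g : letI := NeModule e he ι hmul hone X; NeSub k A e X →ₗ[Bᵐᵒᵖ] Y) (v : X)
    (x : AeSub k A e) :
    coindLift e he ι hmul hone g v x = g ⟨op x.1 • v, smul_mem_NeSub_of_mem_AeSub X v x.2⟩ :=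
  rfl

noncomputable def coindLiftHom
    (g : letI := NeModule e he ι hmul hone X; NeSub k A e X →ₗ[Bᵐᵒᵖ] Y) :
    letI := AeModule e he ι hmul hone
    letI := smulCommB (k := k) Y
    letI := homAModule e he ι hmul hone Y
    X →ₗ[Aᵐᵒᵖ] (AeSub k A e →ₗ[Bᵐᵒᵖ] Y) :=
  letI := AeModule e he ι hmul hone
  letI := smulCommB (k := k) Y
  letI := homAModule e he ι hmul hone Y
  { toFun := coindLift e he ι hmul hone g
    map_add' u w := by
      ext x
      rw [LinearMap.add_apply, coindLift_apply, coindLift_apply, coindLift_apply, ← map_add]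
      exact congrArg g (Subtype.ext (smul_add _ u w))
    map_smul' a v := by
      ext x
      rw [RingHom.id_apply, homAModule_smul_apply, coindLift_apply, coindLift_apply]
      exact congrArg g (Subtype.ext (by simp [smul_smul])) }

noncomputable def evalAtIdem
    (f : letI := AeModule e he ι hmul hone
      letI := smulCommB (k := k) Y
      letI := homAModule e he ι hmul hone Y
      X →ₗ[Aᵐᵒᵖ] (AeSub k A e →ₗ[Bᵐᵒᵖ] Y)) :
    letI := NeModule e he ι hmul hone X
    NeSub k A e X →ₗ[Bᵐᵒᵖ] Y :=
  letI := AeModule e he ι hmul hone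
  letI := smulCommB (k := k) Y
  letI := homAModule e he ι hmul hone Y
  letI := NeModule e he ι hmul hone X
  { toFun v := f v (idemAe e he)
    map_add' u w := by simp
    map_smul' b v := by
      rw [RingHom.id_apply, coe_smul_NeSub, map_smul, homAModule_smul_apply, ← map_smul]
      refine congrArg (f v) (Subtype.ext ?_)
      rw [coe_smul_AeSub]
      exact (iota_mem_corner e ι hmul hone (unop b)).2.symm.trans
        (iota_mem_corner e ι hmul hone (unop b)).1 }

theorem evalAtIdem_coindLiftHom
    (g : letI := NeModule e he ι hmul hone X; NeSub k A e X →ₗ[Bᵐᵒᵖ] Y) :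
    evalAtIdem e he ι hmul hone (coindLiftHom e he ι hmul hone g) = g := by
  let := NeModule e he ι hmul hone X
  ext v
  exact congrArg g (Subtype.ext (e_smul_of_mem_NeSub he X v.2))

theorem coindLiftHom_evalAtIdem
    (f : letI := AeModule e he ι hmul hone
      letI := smulCommB (k := k) Y
      letI := homAModule e he ι hmul hone Y
      X →ₗ[Aᵐᵒᵖ] (AeSub k A e →ₗ[Bᵐᵒᵖ] Y)) :
    coindLiftHom e he ι hmul hone (evalAtIdem e he ι hmul hone f) = f := by
  let := AeModule e he ι hmul hone
  let := smulCommB (k := k) Y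
  let := homAModule e he ι hmul hone Y
  ext v x
  change f (op x.1 • v) (idemAe e he) = f v x
  rw [map_smul, homAModule_smul_apply]
  exact congrArg (f v) (Subtype.ext (mul_eq_self_of_mem_AeSub he x.2))

end HomEquiv

noncomputable def cornerCoindAdjunction :
    cornerFunctor e he ι hmul hone ⊣ coindFunctor e he ι hmul hone :=
  Adjunction.mkOfHomEquiv
    { homEquiv X Y :=
        letI := AeModule e he ι hmul hone
        letI := smulCommB (k := k) Y
        letI := homAModule e he ι hmul hone Y
        letI := NeModule e he ι hmul hone X
        { toFun g := ModuleCat.ofHom (coindLiftHom e he ι hmul hone g.hom)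
          invFun f := ModuleCat.ofHom (evalAtIdem e he ι hmul hone f.hom)
          left_inv g := ModuleCat.hom_ext (evalAtIdem_coindLiftHom e he ι hmul hone g.hom)
          right_inv f := ModuleCat.hom_ext (coindLiftHom_evalAtIdem e he ι hmul hone f.hom) }
      homEquiv_naturality_left_symm _ _ := rfl
      homEquiv_naturality_right _ _ := rfl }

theorem coindFunctor_preservesEpimorphisms
    (hAe : letI := AeModule e he ι hmul hone; Module.Projective Bᵐᵒᵖ (AeSub k A e)) :
    (coindFunctor e he ι hmul hone).PreservesEpimorphisms where
  preserves q hq := by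
    rw [ModuleCat.epi_iff_surjective] at hq ⊢
    let := AeModule e he ι hmul hone
    intro ψ
    exact Module.projective_lifting_property q.hom ψ hq

end Corner

theorem stmt7_general (k A B : Type) [Field k] [Ring A] [Algebra k A] [Ring B] [Algebra k B]
    (e : A) (he : e * e = e)
    (ι : B →ₗ[k] A) (hmul : ∀ x y : B, ι (x * y) = ι x * ι y) (hone : ι 1 = e)
    (M : ModuleCat Bᵐᵒᵖ) (N : ModuleCat Aᵐᵒᵖ) (n : ℕ) :
    letI : Module Bᵐᵒᵖ ↥(AeSub k A e) := AeModule e he ι hmul hone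
    letI : SMulCommClass Bᵐᵒᵖ k M := smulCommB M
    letI : Module Aᵐᵒᵖ (↥(AeSub k A e) →ₗ[Bᵐᵒᵖ] ↥M) := homAModule e he ι hmul hone M
    letI : Module Bᵐᵒᵖ ↥(NeSub k A e N) := NeModule e he ι hmul hone N
    Module.Projective Bᵐᵒᵖ ↥(AeSub k A e) →
    Nonempty
      ((((Ext k (ModuleCat Aᵐᵒᵖ) n).obj (Opposite.op N)).obj
          (ModuleCat.of Aᵐᵒᵖ (↥(AeSub k A e) →ₗ[Bᵐᵒᵖ] ↥M))) ≅
        (((Ext k (ModuleCat Bᵐᵒᵖ) n).obj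
            (Opposite.op (ModuleCat.of Bᵐᵒᵖ ↥(NeSub k A e N)))).obj M)) := by
  intro hAe
  have := coindFunctor_preservesEpimorphisms e he ι hmul hone hAe
  have := cornerFunctor_preservesHomology e he ι hmul hone
  exact ⟨(cornerCoindAdjunction e he ι hmul hone).extIso N M n⟩

/-- Eckmann–Shapiro, coinduction: let `B` be a unital subalgebra of `eAe`
with identity `e` (realized by the injective multiplicative unit-preserving `k`-linear
map `ι : B → A` with `ι 1 = e`), `M` a right `B`-module and `N` a right `A`-module.
If `Ae` is projective as a right `B`-module, then for all `n ≥ 0`,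
`Ext^n_A(N, Hom_B(Ae, M)) ≅ Ext^n_B(N·e, M)`, where `Hom_B(Ae, M)` carries the right
`A`-action `(φ·a)(x) = φ(a·x)`. -/
theorem stmt7 (k A B : Type) [Field k] [Ring A] [Algebra k A] [Ring B] [Algebra k B]
    (e : A) (he : e * e = e)
    (ι : B →ₗ[k] A) (hmul : ∀ x y : B, ι (x * y) = ι x * ι y) (hone : ι 1 = e)
    (hinj : Function.Injective ι)
    (M : ModuleCat Bᵐᵒᵖ) (N : ModuleCat Aᵐᵒᵖ) (n : ℕ) :
    letI : Module Bᵐᵒᵖ ↥(AeSub k A e) := AeModule e he ι hmul hone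
    letI : SMulCommClass Bᵐᵒᵖ k M := smulCommB M
    letI : Module Aᵐᵒᵖ (↥(AeSub k A e) →ₗ[Bᵐᵒᵖ] ↥M) := homAModule e he ι hmul hone M
    letI : Module Bᵐᵒᵖ ↥(NeSub k A e N) := NeModule e he ι hmul hone N
    Module.Projective Bᵐᵒᵖ ↥(AeSub k A e) →
    Nonempty
      ((((Ext k (ModuleCat Aᵐᵒᵖ) n).obj (Opposite.op N)).obj
          (ModuleCat.of Aᵐᵒᵖ (↥(AeSub k A e) →ₗ[Bᵐᵒᵖ] ↥M))) ≅
        (((Ext k (ModuleCat Bᵐᵒᵖ) n).obj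
            (Opposite.op (ModuleCat.of Bᵐᵒᵖ ↥(NeSub k A e N)))).obj M)) :=
  stmt7_general k A B e he ι hmul hone M N n
end

section
/- Let S be a finite regular monoid, k a field, and let M and N be simple right kS-modules having apexes at idempotents e and f of S, respectively. If neither SeS ⊆ SfS nor SfS ⊆ SeS (the apexes are incomparable in the J-order), then Ext¹_{kS}(M, N) = 0. -/
open CategoryTheory MulOpposite

/-!
Work with `R = (kS)ᵐᵒᵖ`, so that right `kS`-modules are left `R`-modules. The apex conditions
give `M f = 0`, `N e = 0`, `M e ≠ 0` and `N f ≠ 0`. Computing `Ext¹` from a projective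
resolution `P₁ → P₀ → M`, it suffices that every `ξ : K → N` on `K = ker (P₀ → M)` extends to `P₀`.
Pick `p₀ ∈ P₀ e` with nonzero image in `M`; since `M` is simple, `P₀ = K + p₀ R`, so `ξ` extends
(by zero on `p₀ R`) once it vanishes on `K ∩ p₀ R`. The image `ξ (K ∩ p₀ R)` is killed by `f`:
`p₀ r f` is a combination of elements `p · ewf ∈ P₀ f ⊆ K`, and by regularity
`ewf = ewf · (t ewf)` with `t ewf ∈ SeS` annihilating `N`. As `N` is simple with `N f ≠ 0`,
that image is zero.
-/

universe u

section Ring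

variable {R P M N : Type*} [Ring R] [AddCommGroup P] [Module R P] [AddCommGroup M] [Module R M]
  [AddCommGroup N] [Module R N]

theorem LinearMap.exists_comp_subtype_eq_of_sup_eq_top {K L : Submodule R P} (hKL : K ⊔ L = ⊤)
    (ξ : K →ₗ[R] N) (hξ : ∀ x : K, (x : P) ∈ L → ξ x = 0) :
    ∃ Ξ : P →ₗ[R] N, Ξ ∘ₗ K.subtype = ξ := by
  let F : P →ₗ.[R] N := ⟨K, ξ⟩
  let G : P →ₗ.[R] N := ⟨L, 0⟩
  have hFG : ∀ (x : F.domain) (y : G.domain), (x : P) = y → F x = G y := fun x y hxy =>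
    hξ x (hxy ▸ y.2)
  refine ⟨(F.sup G hFG).toFun ∘ₗ (LinearEquiv.ofTop _ hKL).symm.toLinearMap, ?_⟩
  ext x
  exact ((F.left_le_sup G hFG).2 rfl).symm

theorem Submodule.eq_bot_of_forall_smul_eq_zero [IsSimpleModule R N] {a : R}
    (ha : ∃ n : N, a • n ≠ 0) {W : Submodule R N} (hW : ∀ w ∈ W, a • w = 0) : W = ⊥ :=
  (eq_bot_or_eq_top W).resolve_right fun hW_top => by
    obtain ⟨n, hn⟩ := ha
    exact hn (hW n (hW_top ▸ Submodule.mem_top))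

theorem Submodule.sup_span_singleton_eq_top_of_ker_le [IsSimpleModule R M] {π : P →ₗ[R] M}
    {K : Submodule R P} (hK : LinearMap.ker π ≤ K) {p₀ : P} (hp₀ : π p₀ ≠ 0) :
    K ⊔ R ∙ p₀ = ⊤ := by
  have hmap : (K ⊔ R ∙ p₀).map π = ⊤ := by
    refine eq_top_iff.2 ?_
    rw [← IsSimpleModule.span_singleton_eq_top R hp₀, ← Set.image_singleton, ← Submodule.map_span]
    exact Submodule.map_mono le_sup_right
  rw [← sup_eq_left.2 (hK.trans le_sup_left), ← Submodule.comap_map_eq, hmap, Submodule.comap_top]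

theorem LinearMap.exists_comp_subtype_eq_of_isSimpleModule [IsSimpleModule R M]
    [IsSimpleModule R N] {π : P →ₗ[R] M} {K : Submodule R P} (hK : ker π ≤ K) (ξ : K →ₗ[R] N)
    {a : R} (ha : ∃ n : N, a • n ≠ 0) {p₀ : P} (hp₀ : π p₀ ≠ 0)
    (hξ : ∀ r : R, (a * r) • p₀ ∈ (ker ξ).map K.subtype) :
    ∃ Ξ : P →ₗ[R] N, Ξ ∘ₗ K.subtype = ξ := by
  refine exists_comp_subtype_eq_of_sup_eq_top
    (Submodule.sup_span_singleton_eq_top_of_ker_le hK hp₀) ξ fun x hx => ?_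
  suffices hW : ((R ∙ p₀).comap K.subtype).map ξ = ⊥ from
    (Submodule.eq_bot_iff _).1 hW _ ⟨x, hx, rfl⟩
  refine Submodule.eq_bot_of_forall_smul_eq_zero ha ?_
  rintro _ ⟨y, hy, rfl⟩
  obtain ⟨r, hr⟩ := Submodule.mem_span_singleton.1 hy
  obtain ⟨z, hz, hzy⟩ := hξ r
  have : z = a • y := Subtype.ext <| calc
    (z : P) = (a * r) • p₀ := hzy
    _ = a • (y : P) := by rw [mul_smul, hr]; rfl
  rwa [← map_smul, ← this]

theorem LinearMap.exists_comp_eq_of_ker_le {P₁ : Type*} [AddCommGroup P₁] [Module R P₁]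
    (d : P₁ →ₗ[R] P) (g : P₁ →ₗ[R] N) (hg : ker d ≤ ker g)
    (hext : ∀ ξ : range d →ₗ[R] N, ∃ Ξ : P →ₗ[R] N, Ξ ∘ₗ (range d).subtype = ξ) :
    ∃ ψ : P →ₗ[R] N, ψ ∘ₗ d = g := by
  obtain ⟨ψ, hψ⟩ := hext ((ker d).liftQ g hg ∘ₗ d.quotKerEquivRange.symm.toLinearMap)
  refine ⟨ψ, LinearMap.ext fun x => ?_⟩
  simpa [quotKerEquivRange_symm_apply_image] using
    LinearMap.congr_fun hψ ⟨d x, mem_range_self d x⟩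

end Ring

section MonoidAlgebra

open MonoidAlgebra

variable {k S P M N : Type*} [Ring k] [Monoid S]
  [AddCommGroup P] [Module (MonoidAlgebra k S)ᵐᵒᵖ P]
  [AddCommGroup M] [Module (MonoidAlgebra k S)ᵐᵒᵖ M]
  [AddCommGroup N] [Module (MonoidAlgebra k S)ᵐᵒᵖ N]

theorem MonoidAlgebra.op_single_smul_eq_zero {e : S}
    (hNe : ∀ n : N, op (single e (1 : k)) • n = 0) (u v : S) (c : k) (n : N) :
    op (single (u * e * v) c) • n = 0 := by
  have : single (u * e * v) c = single u 1 * single e 1 * single v c := by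
    simp [single_mul_single]
  rw [this, op_mul, op_mul, mul_smul, mul_smul, hNe, smul_zero]

theorem MonoidAlgebra.op_single_smul_mem_map_ker (hreg : ∀ s : S, ∃ t : S, s * t * s = s)
    {e : S} (hNe : ∀ n : N, op (single e (1 : k)) • n = 0)
    {K : Submodule (MonoidAlgebra k S)ᵐᵒᵖ P} (ξ : K →ₗ[(MonoidAlgebra k S)ᵐᵒᵖ] N)
    (u v : S) (c : k) (p : P) (hp : op (single (u * e * v) c) • p ∈ K) :
    op (single (u * e * v) c) • p ∈ (LinearMap.ker ξ).map K.subtype := by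
  obtain ⟨t, ht⟩ := hreg (u * e * v)
  set x : K := ⟨_, hp⟩
  have hx : op (single (t * u * e * v) (1 : k)) • x = x := by
    refine Subtype.ext ?_
    have hts : u * e * v * (t * u * e * v) = u * e * v := by simpa only [mul_assoc] using ht
    rw [SetLike.val_smul, smul_smul, ← op_mul, single_mul_single, mul_one, hts]
  refine ⟨x, LinearMap.mem_ker.2 ?_, rfl⟩
  rw [← hx, map_smul, op_single_smul_eq_zero hNe]

theorem MonoidAlgebra.op_mul_mul_smul_mem_map_ker (hreg : ∀ s : S, ∃ t : S, s * t * s = s)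
    {e f : S} (hNe : ∀ n : N, op (single e (1 : k)) • n = 0)
    {K : Submodule (MonoidAlgebra k S)ᵐᵒᵖ P} (hfK : ∀ p : P, op (single f (1 : k)) • p ∈ K)
    (ξ : K →ₗ[(MonoidAlgebra k S)ᵐᵒᵖ] N) (r : (MonoidAlgebra k S)ᵐᵒᵖ) (p : P) :
    (op (single f (1 : k)) * r * op (single e 1)) • p ∈ (LinearMap.ker ξ).map K.subtype := by
  induction r using MulOpposite.rec' with | _ c => ?_
  induction c using MonoidAlgebra.induction_linear with
  | zero => simp
  | add c c' hc hc' => simpa [mul_add, add_mul, add_smul] using add_mem hc hc'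
  | single w c =>
    have h : op (single f (1 : k)) * op (single w c) * op (single e 1)
        = op (single (1 * e * (w * f)) c) := by
      simp [← op_mul, single_mul_single]
    have hmem : op (single (1 * e * (w * f)) c) • p ∈ K := by
      have : single (1 * e * (w * f)) c = single (e * w) c * single f 1 := by
        simp [single_mul_single, mul_assoc]
      rw [this, op_mul, mul_smul]
      exact hfK _
    rw [h]
    exact op_single_smul_mem_map_ker hreg hNe ξ 1 (w * f) c p hmem

theorem MonoidAlgebra.exists_comp_subtype_eq_of_apex (hreg : ∀ s : S, ∃ t : S, s * t * s = s)
    [IsSimpleModule (MonoidAlgebra k S)ᵐᵒᵖ M] [IsSimpleModule (MonoidAlgebra k S)ᵐᵒᵖ N] {e f : S}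
    (hMe : ∃ m : M, op (single e (1 : k)) • m ≠ 0) (hMf : ∀ m : M, op (single f (1 : k)) • m = 0)
    (hNf : ∃ n : N, op (single f (1 : k)) • n ≠ 0) (hNe : ∀ n : N, op (single e (1 : k)) • n = 0)
    {π : P →ₗ[(MonoidAlgebra k S)ᵐᵒᵖ] M} (hπ : Function.Surjective π)
    {K : Submodule (MonoidAlgebra k S)ᵐᵒᵖ P} (hK : LinearMap.ker π ≤ K)
    (ξ : K →ₗ[(MonoidAlgebra k S)ᵐᵒᵖ] N) :
    ∃ Ξ : P →ₗ[(MonoidAlgebra k S)ᵐᵒᵖ] N, Ξ ∘ₗ K.subtype = ξ := by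
  obtain ⟨m, hm⟩ := hMe
  obtain ⟨p, rfl⟩ := hπ m
  refine LinearMap.exists_comp_subtype_eq_of_isSimpleModule hK ξ hNf
    (p₀ := op (single e (1 : k)) • p) (by rwa [map_smul]) fun r => ?_
  rw [smul_smul]
  exact op_mul_mul_smul_mem_map_ker hreg hNe (fun p => hK (by simp [hMf])) ξ r p

end MonoidAlgebra

namespace CategoryTheory.ProjectiveResolution

theorem subsingleton_ext_one {k C : Type*} [Ring k] [Category C] [Abelian C] [Linear k C]
    [EnoughProjectives C] {M N : C} (P : ProjectiveResolution M)
    (h : ∀ g : P.complex.X 1 ⟶ N, P.complex.d 2 1 ≫ g = 0 → ∃ g', P.complex.d 1 0 ≫ g' = g) :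
    Subsingleton (((Ext k C 1).obj (Opposite.op M)).obj N) := by
  refine ModuleCat.subsingleton_of_isZero (Limits.IsZero.of_iso ?_ (P.isoExt 1 N))
  rw [← HomologicalComplex.exactAt_iff_isZero_homology,
    HomologicalComplex.exactAt_iff' _ 0 1 2 (by simp) (by simp), ShortComplex.moduleCat_exact_iff]
  exact h

theorem subsingleton_ext_one_of_forall_exists_comp_subtype_eq {k : Type*} {R : Type u}
    [Field k] [Ring R] [Algebra k R] {M N : ModuleCat.{u} R} (P : ProjectiveResolution M)
    (hext : ∀ π : P.complex.X 0 →ₗ[R] M, Function.Surjective π →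
      ∀ K : Submodule R (P.complex.X 0), LinearMap.ker π ≤ K →
      ∀ ξ : K →ₗ[R] N, ∃ Ξ : P.complex.X 0 →ₗ[R] N, Ξ ∘ₗ K.subtype = ξ) :
    Subsingleton (((Ext k (ModuleCat R) 1).obj (Opposite.op M)).obj N) := by
  refine P.subsingleton_ext_one fun g hg => ?_
  have hπ : Function.Surjective (P.π.f 0).hom := (ModuleCat.epi_iff_surjective _).1 inferInstance
  have hd₁ := P.exact₀.moduleCat_range_eq_ker
  have hd₂ := (P.exact_succ 0).moduleCat_range_eq_ker
  have hg' : LinearMap.ker (P.complex.d 1 0).hom ≤ LinearMap.ker g.hom := by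
    rintro _ hx
    obtain ⟨z, rfl⟩ : _ ∈ LinearMap.range (P.complex.d 2 1).hom := hd₂ ▸ hx
    exact congr($hg z)
  obtain ⟨ψ, hψ⟩ := (P.complex.d 1 0).hom.exists_comp_eq_of_ker_le g.hom hg'
    (hext _ hπ _ hd₁.ge)
  exact ⟨ModuleCat.ofHom ψ, ModuleCat.hom_ext hψ⟩

end CategoryTheory.ProjectiveResolution

theorem stmt8_general (k : Type) [Field k] (S : Type) [Monoid S]
    (hreg : ∀ s : S, ∃ t : S, s * t * s = s)
    (e f : S) (he : e * e = e) (hf : f * f = f)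
    (M N : ModuleCat (MonoidAlgebra k S)ᵐᵒᵖ)
    (hMsimple : IsSimpleModule (MonoidAlgebra k S)ᵐᵒᵖ M)
    (hNsimple : IsSimpleModule (MonoidAlgebra k S)ᵐᵒᵖ N)
    (hMapex : ∀ g : S, g * g = g →
      ((∃ m : M, op (MonoidAlgebra.single g (1 : k)) • m ≠ 0) ↔
        {x : S | ∃ u v : S, x = u * e * v} ⊆ {x : S | ∃ u v : S, x = u * g * v}))
    (hNapex : ∀ g : S, g * g = g →
      ((∃ m : N, op (MonoidAlgebra.single g (1 : k)) • m ≠ 0) ↔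
        {x : S | ∃ u v : S, x = u * f * v} ⊆ {x : S | ∃ u v : S, x = u * g * v}))
    (hincomp :
      ¬ {x : S | ∃ u v : S, x = u * e * v} ⊆ {x : S | ∃ u v : S, x = u * f * v} ∧
      ¬ {x : S | ∃ u v : S, x = u * f * v} ⊆ {x : S | ∃ u v : S, x = u * e * v}) :
    Subsingleton
      (((Ext k (ModuleCat (MonoidAlgebra k S)ᵐᵒᵖ) 1).obj (Opposite.op M)).obj N) := by
  have hMf : ∀ m : M, op (MonoidAlgebra.single f (1 : k)) • m = 0 := fun m =>
    not_not.1 fun hm => hincomp.1 ((hMapex f hf).1 ⟨m, hm⟩)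
  have hNe : ∀ n : N, op (MonoidAlgebra.single e (1 : k)) • n = 0 := fun n =>
    not_not.1 fun hn => hincomp.2 ((hNapex e he).1 ⟨n, hn⟩)
  obtain ⟨P⟩ := HasProjectiveResolution.out (Z := M)
  exact P.subsingleton_ext_one_of_forall_exists_comp_subtype_eq fun π hπ K hK ξ =>
    MonoidAlgebra.exists_comp_subtype_eq_of_apex hreg ((hMapex e he).2 subset_rfl) hMf
      ((hNapex f hf).2 subset_rfl) hNe hπ hK ξ

/-- let `S` be a finite regular monoid, `k` a field, and `M, N` simple right
`kS`-modules with apexes at idempotents `e, f` respectively.  If `SeS ⊄ SfS` and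
`SfS ⊄ SeS` (the apexes are incomparable in the `J`-order), then `Ext¹_{kS}(M, N) = 0`. -/
theorem stmt8 (k : Type) [Field k] (S : Type) [Monoid S] [Finite S]
    (hreg : ∀ s : S, ∃ t : S, s * t * s = s)
    (e f : S) (he : e * e = e) (hf : f * f = f)
    (M N : ModuleCat (MonoidAlgebra k S)ᵐᵒᵖ)
    (hMsimple : IsSimpleModule (MonoidAlgebra k S)ᵐᵒᵖ M)
    (hNsimple : IsSimpleModule (MonoidAlgebra k S)ᵐᵒᵖ N)
    (hMapex : ∀ g : S, g * g = g →
      ((∃ m : M, op (MonoidAlgebra.single g (1 : k)) • m ≠ 0) ↔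
        {x : S | ∃ u v : S, x = u * e * v} ⊆ {x : S | ∃ u v : S, x = u * g * v}))
    (hNapex : ∀ g : S, g * g = g →
      ((∃ m : N, op (MonoidAlgebra.single g (1 : k)) • m ≠ 0) ↔
        {x : S | ∃ u v : S, x = u * f * v} ⊆ {x : S | ∃ u v : S, x = u * g * v}))
    (hincomp :
      ¬ {x : S | ∃ u v : S, x = u * e * v} ⊆ {x : S | ∃ u v : S, x = u * f * v} ∧
      ¬ {x : S | ∃ u v : S, x = u * f * v} ⊆ {x : S | ∃ u v : S, x = u * e * v}) :
    Subsingleton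
      (((Ext k (ModuleCat (MonoidAlgebra k S)ᵐᵒᵖ) 1).obj (Opposite.op M)).obj N) :=
  stmt8_general k S hreg e f he hf M N hMsimple hNsimple hMapex hNapex hincomp
end

section
/- Let S be a finite semigroup. Then the following are equivalent: (a) S is regular (for every s ∈ S there is t ∈ S with s·t·s = s) and every right ideal of S is two-sided (for every nonempty R ⊆ S with R·S ⊆ R one also has S·R ⊆ R); (b) for all s, t ∈ S and every n ≥ 1 such that s^n is idempotent, one has s^n·s = s and s^n·t·s^n = t·s^n. -/
/-!
If every right ideal is two-sided, then `x * (a * w) ∈ a * S` for all `a, x, w`. For an idempotent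
`e` this gives `x * e = e * v`, hence `e * x * e = x * e`; for `s = s * t * s` it gives
`t * s = s * v`, hence `s = s * s * v`, so `s ∈ s ^ n * S` and every idempotent power of `s` fixes
`s` from the left. Conversely, if `e` is an idempotent power of `r ∈ R`, then `e ∈ R` and
`x * r = x * e * r = e * (x * e * r) ∈ R`, while `s ^ (2n - 1)` is an inverse of `s` when
`s ^ n` is idempotent and `s ^ n * s = s`.
-/

/-- `spow s n` is the (n+1)-st power `s^(n+1)` of `s`, so that `spow s n` for `n : ℕ`
ranges over all positive powers of `s`. -/
def spow {S : Type*} [Semigroup S] (s : S) : ℕ → S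
  | 0 => s
  | n + 1 => spow s n * s

section Powers

variable {S : Type*} [Semigroup S]

lemma spow_succ' (s : S) (n : ℕ) : spow s (n + 1) = s * spow s n := by
  induction n with
  | zero => rfl
  | succ k ih =>
    calc spow s (k + 1 + 1) = spow s (k + 1) * s := rfl
      _ = s * spow s k * s := by rw [ih]
      _ = s * spow s (k + 1) := mul_assoc _ _ _

lemma spow_mul_spow (s : S) (m n : ℕ) : spow s m * spow s n = spow s (m + n + 1) := by
  induction n with
  | zero => rfl
  | succ k ih => rw [spow, ← mul_assoc, ih]; rfl

lemma spow_add_eq_of_le {s : S} {i p : ℕ} (h : spow s (i + p) = spow s i) {m : ℕ} (hm : i ≤ m) :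
    spow s (m + p) = spow s m := by
  induction m, hm using Nat.le_induction with
  | base => exact h
  | succ m _ ih => rw [Nat.add_right_comm, spow, ih, ← spow]

lemma spow_add_mul_eq_of_le {s : S} {i p : ℕ} (h : spow s (i + p) = spow s i) {m : ℕ}
    (hm : i ≤ m) (q : ℕ) : spow s (m + q * p) = spow s m := by
  induction q with
  | zero => simp
  | succ q ih =>
    rw [Nat.succ_mul, ← Nat.add_assoc, spow_add_eq_of_le h (hm.trans (Nat.le_add_right _ _)), ih]

lemma exists_spow_mul_spow_eq [Finite S] (s : S) : ∃ n, spow s n * spow s n = spow s n := by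
  obtain ⟨i, j, hij, heq⟩ := Finite.exists_ne_map_eq_of_infinite (spow s)
  wlog hlt : i < j generalizing i j
  · exact this j i hij.symm heq.symm (hij.lt_or_gt.resolve_left hlt)
  obtain ⟨p, rfl⟩ := Nat.exists_eq_add_of_lt hlt
  have hper : spow s (i + (p + 1)) = spow s i := by rw [← Nat.add_assoc]; exact heq.symm
  -- `n + 1 = (i + 1) * (p + 1)` is a multiple of the period with `n ≥ i`
  refine ⟨i + (i + 1) * p, ?_⟩
  rw [spow_mul_spow, show i + (i + 1) * p + (i + (i + 1) * p) + 1
    = i + (i + 1) * p + (i + 1) * (p + 1) by ring]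
  exact spow_add_mul_eq_of_le hper (Nat.le_add_right _ _) _

lemma exists_eq_spow_mul_of_eq_mul_mul {s v : S} (h : s = s * s * v) (n : ℕ) :
    ∃ y, s = spow s n * y := by
  induction n with
  | zero => exact ⟨s * v, by rw [← mul_assoc]; exact h⟩
  | succ n ih =>
    obtain ⟨y, hy⟩ := ih
    refine ⟨y * v, ?_⟩
    rw [spow_succ', mul_assoc s, ← mul_assoc (spow s n), ← hy, ← mul_assoc]
    exact h

lemma spow_mem_of_mul_mem {R : Set S} (hR : ∀ r ∈ R, ∀ s : S, r * s ∈ R) {r : S} (hr : r ∈ R)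
    (n : ℕ) : spow r n ∈ R := by
  induction n with
  | zero => exact hr
  | succ n ih => exact hR _ ih r

lemma mul_spow_mul_eq_self {s : S} {n : ℕ} (he : spow s n * spow s n = spow s n)
    (hs : spow s n * s = s) : s * spow s (n + n) * s = s := by
  rw [← spow_succ', ← spow_mul_spow, he, hs]

end Powers

section TwoSidedRightIdeals

variable {S : Type*} [Semigroup S]
  (hduo : ∀ R : Set S, R.Nonempty → (∀ r ∈ R, ∀ s : S, r * s ∈ R) → (∀ r ∈ R, ∀ s : S, s * r ∈ R))
include hduo

lemma exists_mul_mul_eq_mul (a x w : S) : ∃ v, x * (a * w) = a * v := by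
  obtain ⟨v, hv⟩ := hduo (Set.range (a * ·)) ⟨a * w, w, rfl⟩
    (by rintro _ ⟨u, rfl⟩ s; exact ⟨u * s, (mul_assoc _ _ _).symm⟩) _ ⟨w, rfl⟩ x
  exact ⟨v, hv.symm⟩

lemma mul_mul_eq_of_idempotent {e : S} (he : e * e = e) (x : S) : e * x * e = x * e := by
  obtain ⟨v, hv⟩ := exists_mul_mul_eq_mul hduo e x e
  rw [he] at hv
  rw [mul_assoc, hv, ← mul_assoc, he]

lemma exists_eq_mul_mul_of_regular {s t : S} (hs : s * t * s = s) : ∃ v, s = s * s * v := by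
  obtain ⟨v, hv⟩ := exists_mul_mul_eq_mul hduo s t (t * s)
  rw [← mul_assoc s t s, hs] at hv
  exact ⟨v, by rw [mul_assoc, ← hv, ← mul_assoc, hs]⟩

lemma spow_mul_eq_self_of_regular {s t : S} (hs : s * t * s = s) {n : ℕ}
    (he : spow s n * spow s n = spow s n) : spow s n * s = s := by
  obtain ⟨v, hv⟩ := exists_eq_mul_mul_of_regular hduo hs
  obtain ⟨y, hy⟩ := exists_eq_spow_mul_of_eq_mul_mul hv n
  calc spow s n * s = spow s n * spow s n * y := by rw [mul_assoc, ← hy]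
    _ = s := by rw [he, ← hy]

end TwoSidedRightIdeals

/-- a finite semigroup `S` is regular with every right ideal two-sided
iff `s^n·s = s` and `s^n·t·s^n = t·s^n` whenever the positive power `s^n` is idempotent. -/
theorem stmt11 (S : Type*) [Semigroup S] [Finite S] :
    ((∀ s : S, ∃ t : S, s * t * s = s) ∧
      (∀ R : Set S, R.Nonempty → (∀ r ∈ R, ∀ s : S, r * s ∈ R) →
        (∀ r ∈ R, ∀ s : S, s * r ∈ R))) ↔
    (∀ s t : S, ∀ n : ℕ, spow s n * spow s n = spow s n →
      spow s n * s = s ∧ spow s n * t * spow s n = t * spow s n) := by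
  constructor
  · rintro ⟨hreg, hduo⟩ s t n he
    obtain ⟨u, hu⟩ := hreg s
    exact ⟨spow_mul_eq_self_of_regular hduo hu he, mul_mul_eq_of_idempotent hduo he t⟩
  · intro h
    refine ⟨fun s ↦ ?_, fun R _ hR r hr x ↦ ?_⟩
    · obtain ⟨n, hn⟩ := exists_spow_mul_spow_eq s
      exact ⟨spow s (n + n), mul_spow_mul_eq_self hn (h s s n hn).1⟩
    · obtain ⟨n, hn⟩ := exists_spow_mul_spow_eq r
      obtain ⟨hfix, hcomm⟩ := h r x n hn
      have hmem : spow r n * (x * spow r n * r) ∈ R := hR _ (spow_mem_of_mul_mem hR hr n) _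
      rwa [← mul_assoc, ← mul_assoc, hcomm, mul_assoc, hfix] at hmem
end

section
/- Let S be a right regular band of groups that is a monoid, and let c ∈ S. Then the set {s ∈ S : c ∈ s·S} is a submonoid of S: it contains the identity and is closed under multiplication. (Equivalently, the complement in S of the ideal of elements not J-above a given J-class is a subsemigroup.) -/
theorem spow_eq_pow {S : Type*} [Monoid S] (s : S) : ∀ n : ℕ, spow s n = s ^ (n + 1)
  | 0 => by rw [spow, zero_add, pow_one]
  | n + 1 => by rw [spow, spow_eq_pow s n, ← pow_succ]

theorem exists_isIdempotentElem_pow_succ {S : Type*} [Monoid S] [Finite S] (s : S) :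
    ∃ n : ℕ, IsIdempotentElem (s ^ (n + 1)) := by
  obtain ⟨m, n, hmn, hpow⟩ := Finite.exists_ne_map_eq_of_infinite (s ^ · : ℕ → S)
  wlog hlt : m < n generalizing m n
  · exact this n m hmn.symm hpow.symm (by omega)
  obtain ⟨p, rfl⟩ : ∃ p, n = m + (p + 1) := ⟨n - m - 1, by omega⟩
  have periodic : ∀ k j : ℕ, s ^ (m + j + k * (p + 1)) = s ^ (m + j) := by
    intro k j
    induction k with
    | zero => simp
    | succ k ih =>
      calc s ^ (m + j + (k + 1) * (p + 1))
          = s ^ (m + (p + 1)) * s ^ (j + k * (p + 1)) := by rw [← pow_add]; ring_nf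
        _ = s ^ (m + j) := by rw [← hpow, ← pow_add, ← add_assoc, ih]
  -- `(m + 1) * (p + 1)` is a multiple of the period `p + 1` that lies past the index `m`.
  refine ⟨m * (p + 1) + p, ?_⟩
  calc s ^ (m * (p + 1) + p + 1) * s ^ (m * (p + 1) + p + 1)
      = s ^ (m + (m * p + p + 1) + (m + 1) * (p + 1)) := by rw [← pow_add]; ring_nf
    _ = s ^ (m * (p + 1) + p + 1) := by rw [periodic]; ring_nf

theorem exists_isIdempotentElem_mul_and_mul_mul_eq_self {S : Type*} [Monoid S] [Finite S] {s : S}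
    (h1 : ∀ n : ℕ, spow s n * spow s n = spow s n → spow s n * s = s) :
    ∃ u : S, IsIdempotentElem (s * u) ∧ s * u * s = s := by
  obtain ⟨n, hidem⟩ := exists_isIdempotentElem_pow_succ s
  refine ⟨s ^ n, by rwa [← pow_succ'], ?_⟩
  rw [← pow_succ', ← spow_eq_pow]
  exact h1 n (by rw [spow_eq_pow]; exact hidem)

theorem exists_mul_eq_mul_of_isIdempotentElem_mul {S : Type*} [Semigroup S]
    (h2 : ∀ e : S, e * e = e → ∀ t : S, e * t * e = t * e) {s u : S}
    (he : IsIdempotentElem (s * u)) (hs : s * u * s = s) (t : S) : ∃ w : S, t * s = s * w :=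
  ⟨u * t * (s * u) * s, by
    calc t * s = t * (s * u) * s := by rw [mul_assoc, hs]
      _ = s * u * t * (s * u) * s := by rw [h2 _ he]
      _ = s * (u * t * (s * u) * s) := by simp only [mul_assoc]⟩

/-- if `S` is a right regular band of groups which is a monoid and `c ∈ S`,
then `{s : c ∈ sS}` is a submonoid of `S`. -/
theorem stmt15 (S : Type*) [Monoid S] [Finite S]
    (h1 : ∀ s : S, ∀ n : ℕ, spow s n * spow s n = spow s n → spow s n * s = s)
    (h2 : ∀ e : S, e * e = e → ∀ t : S, e * t * e = t * e)
    (c : S) :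
    (1 : S) ∈ {s : S | ∃ x : S, c = s * x} ∧
    (∀ a ∈ {s : S | ∃ x : S, c = s * x}, ∀ b ∈ {s : S | ∃ x : S, c = s * x},
      a * b ∈ {s : S | ∃ x : S, c = s * x}) := by
  refine ⟨⟨c, (one_mul c).symm⟩, ?_⟩
  rintro a ⟨x, rfl⟩ b ⟨y, hy⟩
  obtain ⟨u, -, hu⟩ := exists_isIdempotentElem_mul_and_mul_mul_eq_self (h1 (a * x))
  obtain ⟨v, hv, hbv⟩ := exists_isIdempotentElem_mul_and_mul_mul_eq_self (h1 b)
  obtain ⟨w, hw⟩ := exists_mul_eq_mul_of_isIdempotentElem_mul h2 hv hbv (x * u)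
  refine ⟨w * y, ?_⟩
  calc a * x = a * x * u * (a * x) := hu.symm
    _ = a * (x * u * (b * y)) := by rw [← hy, mul_assoc a x, mul_assoc a]
    _ = a * b * (w * y) := by rw [← mul_assoc (x * u), hw, mul_assoc, mul_assoc]
end

section
/- Let S be a right regular band of groups that is a monoid, k a field, A = kS the monoid algebra, and e ∈ S an idempotent. Let M be a simple right A-module with M·e ≠ 0. Then: (a) M·e is a simple right e·A·e-module; (b) the operation v ⋆ a := v·(a·e), for v ∈ M·e and a ∈ A, makes the vector space M·e into a right A-module, and this A-module is isomorphic to M. -/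
/-!
Write `ε` for `e` viewed in `kS`. For (a): a nonzero `v ∈ M·e` generates the simple module `M`,
so every `w ∈ M·e` is `v·r` for some `r`, and then `w = w·ε = v·(ε r ε)` with `ε r ε` in the
corner. For (b): the identity `ε a ε = a ε`, which is right regularity read in `kS`, says
exactly that `m ↦ m·ε` is `A`-linear from `M` to `(M·e, ⋆)`; it is onto since `ε` fixes `M·e`,
and injective since its kernel is a proper submodule of the simple module `M`.
-/

open CategoryTheory MulOpposite ModuleCat

section Corner

variable (k : Type) [Field k] (A : Type) [Ring A] [Algebra k A]

/-- The `k`-subspace `εAε = {x : A | ε·x·ε = x}` of `A`. -/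
def cornerSubmodule (ε : A) : Submodule k A where
  carrier := {x : A | ε * x * ε = x}
  add_mem' := by
    intro a b ha hb
    show ε * (a + b) * ε = a + b
    rw [mul_add, add_mul, ha, hb]
  zero_mem' := by
    show ε * 0 * ε = 0
    rw [mul_zero, zero_mul]
  smul_mem' := by
    intro c x hx
    show ε * (c • x) * ε = c • x
    rw [mul_smul_comm, smul_mul_assoc, hx]

/-- The corner ring `εAε` at an idempotent `ε` of `A`,
a unital `k`-algebra with identity `ε`. -/
def Corner (ε : A) (_hε : ε * ε = ε) : Type := ↥(cornerSubmodule k A ε)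

namespace Corner

variable {k A} {ε : A} {hε : ε * ε = ε}

instance : AddCommGroup (Corner k A ε hε) :=
  inferInstanceAs (AddCommGroup ↥(cornerSubmodule k A ε))

instance : Module k (Corner k A ε hε) :=
  inferInstanceAs (Module k ↥(cornerSubmodule k A ε))

/-- The underlying element of `A`. -/
def val (x : Corner k A ε hε) : A := (show ↥(cornerSubmodule k A ε) from x).1

theorem prop (x : Corner k A ε hε) : ε * val x * ε = val x :=
  (show ↥(cornerSubmodule k A ε) from x).2

/-- Build an element of the corner. -/
def mk (x : A) (hx : ε * x * ε = x) : Corner k A ε hε :=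
  show ↥(cornerSubmodule k A ε) from ⟨x, hx⟩

theorem val_injective : Function.Injective (val : Corner k A ε hε → A) := by
  intro a b h
  exact Subtype.ext h

theorem eps_mul (hε : ε * ε = ε) {x : A} (hx : ε * x * ε = x) : ε * x = x := by
  conv_lhs => rw [← hx]
  simp only [← mul_assoc]
  rw [hε, hx]

theorem mul_eps (hε : ε * ε = ε) {x : A} (hx : ε * x * ε = x) : x * ε = x := by
  conv_lhs => rw [← hx]
  rw [mul_assoc, hε, hx]

theorem mem_mul (hε : ε * ε = ε) {x y : A} (hx : ε * x * ε = x) (hy : ε * y * ε = y) :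
    ε * (x * y) * ε = x * y := by
  simp only [← mul_assoc]
  rw [eps_mul hε hx, mul_assoc, mul_eps hε hy]

noncomputable instance ring : Ring (Corner k A ε hε) :=
  { (inferInstance : AddCommGroup (Corner k A ε hε)) with
    mul := fun x y => mk (val x * val y) (mem_mul hε x.prop y.prop)
    mul_assoc := fun a b c => val_injective (mul_assoc (val a) (val b) (val c))
    one := mk ε (by rw [hε, hε])
    one_mul := fun a => val_injective (eps_mul hε a.prop)
    mul_one := fun a => val_injective (mul_eps hε a.prop)
    left_distrib := fun a b c => val_injective (mul_add (val a) (val b) (val c))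
    right_distrib := fun a b c => val_injective (add_mul (val a) (val b) (val c))
    zero_mul := fun a => val_injective (zero_mul (val a))
    mul_zero := fun a => val_injective (mul_zero (val a)) }

theorem val_mul (x y : Corner k A ε hε) : val (x * y) = val x * val y := rfl
theorem val_one : val (1 : Corner k A ε hε) = ε := rfl

noncomputable instance algebra : Algebra k (Corner k A ε hε) :=
  Algebra.ofModule
    (fun c x y => val_injective (by
      show (c • val x) * val y = c • (val x * val y)
      exact smul_mul_assoc c (val x) (val y)))
    (fun c x y => val_injective (by
      show val x * (c • val y) = c • (val x * val y)
      exact mul_smul_comm c (val x) (val y)))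

end Corner

end Corner

section Me

variable {k : Type} [Field k] {S : Type} [Monoid S]

theorem singleIdem (k : Type) [Field k] {S : Type} [Monoid S] {e : S} (he : e * e = e) :
    MonoidAlgebra.single e (1 : k) * MonoidAlgebra.single e (1 : k)
      = MonoidAlgebra.single e (1 : k) := by
  rw [MonoidAlgebra.single_mul_single, he, one_mul]

/-- The subspace `M·e` of a right `kS`-module `M`. -/
noncomputable def MeSub (k : Type) [Field k] {S : Type} [Monoid S] (e : S)
    (M : ModuleCat (MonoidAlgebra k S)ᵐᵒᵖ) : Submodule k M :=
  Submodule.span k {m : M | ∃ m' : M, m = op (MonoidAlgebra.single e (1 : k)) • m'}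

theorem smul_comm_k (M : ModuleCat (MonoidAlgebra k S)ᵐᵒᵖ)
    (r : (MonoidAlgebra k S)ᵐᵒᵖ) (c : k) (v : M) : r • (c • v) = c • (r • v) := by
  rw [algebra_compatible_smul (MonoidAlgebra k S)ᵐᵒᵖ c v,
    algebra_compatible_smul (MonoidAlgebra k S)ᵐᵒᵖ c (r • v),
    smul_smul, smul_smul, Algebra.commutes]

theorem e_smul_of_mem {e : S}
    (hε : MonoidAlgebra.single e (1 : k) * MonoidAlgebra.single e (1 : k)
      = MonoidAlgebra.single e (1 : k))
    (M : ModuleCat (MonoidAlgebra k S)ᵐᵒᵖ) {v : M} (hv : v ∈ MeSub k e M) :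
    op (MonoidAlgebra.single e (1 : k)) • v = v := by
  induction hv using Submodule.span_induction with
  | mem w hw =>
      obtain ⟨m, rfl⟩ := hw
      rw [smul_smul, ← op_mul, hε]
  | zero => rw [smul_zero]
  | add a b _ _ ha hb => rw [smul_add, ha, hb]
  | smul c a _ ha => rw [smul_comm_k, ha]

theorem smul_eps_mem {e : S} (a : MonoidAlgebra k S) (M : ModuleCat (MonoidAlgebra k S)ᵐᵒᵖ)
    (v : M) : op (a * MonoidAlgebra.single e (1 : k)) • v ∈ MeSub k e M := by
  apply Submodule.subset_span
  exact ⟨op a • v, by rw [smul_smul, ← op_mul]⟩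

/-- Right multiplication by elements of the corner algebra `e·kS·e`, as a ring
homomorphism from the opposite of the corner algebra to the endomorphisms of `M·e`. -/
noncomputable def cornerHom (e : S)
    (hε : MonoidAlgebra.single e (1 : k) * MonoidAlgebra.single e (1 : k)
      = MonoidAlgebra.single e (1 : k))
    (M : ModuleCat (MonoidAlgebra k S)ᵐᵒᵖ) :
    (Corner k (MonoidAlgebra k S) (MonoidAlgebra.single e (1 : k)) hε)ᵐᵒᵖ →+*
      Module.End k ↥(MeSub k e M) where
  toFun b :=
    { toFun := fun v => ⟨op (Corner.val (unop b)) • v.1, by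
        rw [← Corner.mul_eps hε (unop b).prop]
        exact smul_eps_mem _ M v.1⟩
      map_add' := fun a b => Subtype.ext (by
        show op _ • ((a : M) + (b : M)) = op _ • (a : M) + op _ • (b : M)
        rw [smul_add])
      map_smul' := fun c a => Subtype.ext (by
        show op _ • ((c • a : ↥(MeSub k e M)) : M) = c • (op _ • (a : M))
        rw [Submodule.coe_smul, smul_comm_k]) }
  map_one' := by
    ext v
    show op (Corner.val (1 : Corner k (MonoidAlgebra k S) _ _)) • (v : M) = (v : M)
    rw [Corner.val_one]
    exact e_smul_of_mem hε M v.2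
  map_mul' x y := by
    ext v
    show op (Corner.val (unop y * unop x)) • (v : M)
      = op (Corner.val (unop x)) • (op (Corner.val (unop y)) • (v : M))
    rw [Corner.val_mul, smul_smul, ← op_mul]
  map_zero' := by
    ext v
    show op (Corner.val (0 : Corner k (MonoidAlgebra k S) _ _)) • (v : M) = 0
    show op ((0 : MonoidAlgebra k S)) • (v : M) = 0
    rw [op_zero, zero_smul]
  map_add' x y := by
    ext v
    show op (Corner.val (unop x + unop y)) • (v : M)
      = op (Corner.val (unop x)) • (v : M) + op (Corner.val (unop y)) • (v : M)
    show op (Corner.val (unop x) + Corner.val (unop y)) • (v : M) = _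
    rw [MulOpposite.op_add, add_smul]

/-- `M·e` is a right module over the corner algebra `e·kS·e`. -/
noncomputable instance cornerModule (e : S)
    (hε : MonoidAlgebra.single e (1 : k) * MonoidAlgebra.single e (1 : k)
      = MonoidAlgebra.single e (1 : k))
    (M : ModuleCat (MonoidAlgebra k S)ᵐᵒᵖ) :
    Module (Corner k (MonoidAlgebra k S) (MonoidAlgebra.single e (1 : k)) hε)ᵐᵒᵖ
      ↥(MeSub k e M) :=
  Module.compHom _ (cornerHom e hε M)

theorem eps_conj {e : S} (he : e * e = e) (h2e : ∀ t : S, e * t * e = t * e)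
    (c : MonoidAlgebra k S) :
    MonoidAlgebra.single e (1 : k) * c * MonoidAlgebra.single e (1 : k)
      = c * MonoidAlgebra.single e (1 : k) := by
  induction c using MonoidAlgebra.induction_on with
  | of g =>
      simp only [MonoidAlgebra.of_apply, MonoidAlgebra.single_mul_single, one_mul, h2e g]
  | add f g hf hg => rw [mul_add, add_mul, hf, hg, add_mul]
  | smul c f hf =>
      rw [mul_smul_comm, smul_mul_assoc, hf, smul_mul_assoc]

/-- The `⋆`-action `v ⋆ a := v·(a·e)` of `kS` on `M·e`, as a ring homomorphism. -/
noncomputable def starHom (e : S) (he : e * e = e) (h2e : ∀ t : S, e * t * e = t * e)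
    (M : ModuleCat (MonoidAlgebra k S)ᵐᵒᵖ) :
    (MonoidAlgebra k S)ᵐᵒᵖ →+* Module.End k ↥(MeSub k e M) where
  toFun a :=
    { toFun := fun v => ⟨op (unop a * MonoidAlgebra.single e (1 : k)) • v.1,
        smul_eps_mem _ M v.1⟩
      map_add' := fun x y => Subtype.ext (by
        show op _ • ((x : M) + (y : M)) = op _ • (x : M) + op _ • (y : M)
        rw [smul_add])
      map_smul' := fun c x => Subtype.ext (by
        show op _ • ((c • x : ↥(MeSub k e M)) : M) = c • (op _ • (x : M))
        rw [Submodule.coe_smul, smul_comm_k]) }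
  map_one' := by
    ext v
    show op ((1 : MonoidAlgebra k S) * MonoidAlgebra.single e (1 : k)) • (v : M) = (v : M)
    rw [one_mul]
    exact e_smul_of_mem (singleIdem k he) M v.2
  map_mul' x y := by
    ext v
    show op (unop y * unop x * MonoidAlgebra.single e (1 : k)) • (v : M)
      = op (unop x * MonoidAlgebra.single e (1 : k)) •
          (op (unop y * MonoidAlgebra.single e (1 : k)) • (v : M))
    rw [smul_smul, ← op_mul]
    congr 2
    symm
    calc unop y * MonoidAlgebra.single e (1 : k) *
          (unop x * MonoidAlgebra.single e (1 : k))
        = unop y * (MonoidAlgebra.single e (1 : k) * unop x *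
            MonoidAlgebra.single e (1 : k)) := by
          simp only [mul_assoc]
      _ = unop y * (unop x * MonoidAlgebra.single e (1 : k)) := by
          rw [eps_conj he h2e]
      _ = unop y * unop x * MonoidAlgebra.single e (1 : k) := by
          rw [mul_assoc]
  map_zero' := by
    ext v
    show op ((0 : MonoidAlgebra k S) * MonoidAlgebra.single e (1 : k)) • (v : M) = 0
    rw [zero_mul, op_zero, zero_smul]
  map_add' x y := by
    ext v
    show op ((unop x + unop y) * MonoidAlgebra.single e (1 : k)) • (v : M)
      = op (unop x * MonoidAlgebra.single e (1 : k)) • (v : M) +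
        op (unop y * MonoidAlgebra.single e (1 : k)) • (v : M)
    rw [add_mul, MulOpposite.op_add, add_smul]

/-- The right `kS`-module structure `v ⋆ a := v·(a·e)` on `M·e`. -/
noncomputable def starModule (e : S) (he : e * e = e) (h2e : ∀ t : S, e * t * e = t * e)
    (M : ModuleCat (MonoidAlgebra k S)ᵐᵒᵖ) :
    Module (MonoidAlgebra k S)ᵐᵒᵖ ↥(MeSub k e M) :=
  Module.compHom _ (starHom e he h2e M)

end Me

section SimpleMe

open MonoidAlgebra

variable {k : Type} [Field k] {S : Type} [Monoid S] {e : S}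
  {M : ModuleCat (MonoidAlgebra k S)ᵐᵒᵖ}

theorem single_smul_mem_MeSub (m : M) : op (single e (1 : k)) • m ∈ MeSub k e M :=
  Submodule.subset_span ⟨m, rfl⟩

theorem nontrivial_MeSub (hMe : ∃ m : M, op (single e (1 : k)) • m ≠ 0) :
    Nontrivial (MeSub k e M) := by
  obtain ⟨m, hm⟩ := hMe
  exact ⟨⟨⟨_, single_smul_mem_MeSub m⟩, 0, fun h => hm (congrArg Subtype.val h)⟩⟩

theorem exists_corner_smul_eq (he : e * e = e)
    [IsSimpleModule (MonoidAlgebra k S)ᵐᵒᵖ M] {v : MeSub k e M} (hv : v ≠ 0)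
    (w : MeSub k e M) :
    ∃ c : (Corner k (MonoidAlgebra k S) (single e (1 : k)) (singleIdem k he))ᵐᵒᵖ,
      c • v = w := by
  set ε : MonoidAlgebra k S := single e (1 : k)
  have hεε : ε * ε = ε := singleIdem k he
  obtain ⟨r, hr⟩ := (Submodule.span_singleton_eq_top_iff (MonoidAlgebra k S)ᵐᵒᵖ (v : M)).mp
    (IsSimpleModule.span_singleton_eq_top (MonoidAlgebra k S)ᵐᵒᵖ fun h => hv (Subtype.ext h)) w
  have hc : ε * (ε * unop r * ε) * ε = ε * unop r * ε := by
    simp only [← mul_assoc, hεε]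
    rw [mul_assoc _ ε ε, hεε]
  refine ⟨op (Corner.mk (ε * unop r * ε) hc), Subtype.ext ?_⟩
  change op (ε * unop r * ε) • (v : M) = w
  calc op (ε * unop r * ε) • (v : M) = op ε • r • op ε • (v : M) := by
        rw [smul_smul, smul_smul, ← op_unop r, ← op_mul, ← op_mul, unop_op, mul_assoc]
    _ = w := by rw [e_smul_of_mem hεε M v.2, hr, e_smul_of_mem hεε M w.2]

theorem isSimpleModule_corner_MeSub (he : e * e = e)
    [IsSimpleModule (MonoidAlgebra k S)ᵐᵒᵖ M]
    (hMe : ∃ m : M, op (single e (1 : k)) • m ≠ 0) :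
    IsSimpleModule (Corner k (MonoidAlgebra k S) (single e (1 : k)) (singleIdem k he))ᵐᵒᵖ
      (MeSub k e M) :=
  isSimpleModule_iff_toSpanSingleton_surjective.mpr
    ⟨nontrivial_MeSub hMe, fun _ hv w => exists_corner_smul_eq he hv w⟩

noncomputable def mulSingleToStar (he : e * e = e) (h2e : ∀ t : S, e * t * e = t * e)
    (M : ModuleCat (MonoidAlgebra k S)ᵐᵒᵖ) :
    letI := starModule e he h2e M
    M →ₗ[(MonoidAlgebra k S)ᵐᵒᵖ] MeSub k e M :=
  let := starModule e he h2e M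
  { toFun := fun m => ⟨_, single_smul_mem_MeSub m⟩
    map_add' := fun m n => Subtype.ext (smul_add _ m n)
    map_smul' := fun r m => Subtype.ext (by
      change op (single e (1 : k)) • r • m = op (unop r * single e 1) • op (single e 1) • m
      rw [smul_smul, smul_smul, ← op_unop r, ← op_mul, ← op_mul, unop_op, ← mul_assoc,
        eps_conj he h2e]) }

theorem mulSingleToStar_surjective (he : e * e = e) (h2e : ∀ t : S, e * t * e = t * e) :
    letI := starModule e he h2e M
    Function.Surjective (mulSingleToStar he h2e M) :=
  fun w => ⟨w, Subtype.ext (e_smul_of_mem (singleIdem k he) M w.2)⟩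

theorem mulSingleToStar_injective (he : e * e = e) (h2e : ∀ t : S, e * t * e = t * e)
    [IsSimpleModule (MonoidAlgebra k S)ᵐᵒᵖ M]
    (hMe : ∃ m : M, op (single e (1 : k)) • m ≠ 0) :
    letI := starModule e he h2e M
    Function.Injective (mulSingleToStar he h2e M) := by
  let := starModule e he h2e M
  refine LinearMap.injective_of_ne_zero (f := mulSingleToStar he h2e M) fun h => ?_
  obtain ⟨m, hm⟩ := hMe
  exact hm (congrArg Subtype.val (LinearMap.congr_fun h m))

end SimpleMe

theorem stmt16_general (k : Type) [Field k] (S : Type) [Monoid S]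
    (h2 : ∀ e : S, e * e = e → ∀ t : S, e * t * e = t * e)
    (e : S) (he : e * e = e)
    (M : ModuleCat (MonoidAlgebra k S)ᵐᵒᵖ)
    (hMsimple : IsSimpleModule (MonoidAlgebra k S)ᵐᵒᵖ M)
    (hMe : ∃ m : M, op (MonoidAlgebra.single e (1 : k)) • m ≠ 0) :
    IsSimpleModule (Corner k (MonoidAlgebra k S) (MonoidAlgebra.single e (1 : k))
        (singleIdem k he))ᵐᵒᵖ ↥(MeSub k e M) ∧
    (letI : Module (MonoidAlgebra k S)ᵐᵒᵖ ↥(MeSub k e M) := starModule e he (h2 e he) M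
     Nonempty (↥(MeSub k e M) ≃ₗ[(MonoidAlgebra k S)ᵐᵒᵖ] M)) := by
  let := starModule e he (h2 e he) M
  have := hMsimple
  exact ⟨isSimpleModule_corner_MeSub he hMe,
    ⟨(LinearEquiv.ofBijective (mulSingleToStar he (h2 e he) M)
      ⟨mulSingleToStar_injective he (h2 e he) hMe,
        mulSingleToStar_surjective he (h2 e he)⟩).symm⟩⟩

/-- let `S` be a right regular band of groups which is a monoid, `k` a
field, `A = kS`, `e ∈ S` an idempotent, and `M` a simple right `A`-module with `M·e ≠ 0`.
Then (a) `M·e` is a simple right `eAe`-module, and (b) the action `v ⋆ a := v·(a·e)`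
makes `M·e` a right `A`-module isomorphic to `M`. -/
theorem stmt16 (k : Type) [Field k] (S : Type) [Monoid S] [Finite S]
    (h1 : ∀ s : S, ∀ n : ℕ, spow s n * spow s n = spow s n → spow s n * s = s)
    (h2 : ∀ e : S, e * e = e → ∀ t : S, e * t * e = t * e)
    (e : S) (he : e * e = e)
    (M : ModuleCat (MonoidAlgebra k S)ᵐᵒᵖ)
    (hMsimple : IsSimpleModule (MonoidAlgebra k S)ᵐᵒᵖ M)
    (hMe : ∃ m : M, op (MonoidAlgebra.single e (1 : k)) • m ≠ 0) :
    IsSimpleModule (Corner k (MonoidAlgebra k S) (MonoidAlgebra.single e (1 : k))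
        (singleIdem k he))ᵐᵒᵖ ↥(MeSub k e M) ∧
    (letI : Module (MonoidAlgebra k S)ᵐᵒᵖ ↥(MeSub k e M) := starModule e he (h2 e he) M
     Nonempty (↥(MeSub k e M) ≃ₗ[(MonoidAlgebra k S)ᵐᵒᵖ] M)) :=
  stmt16_general k S h2 e he M hMsimple hMe
end

section
/- Let S be a right regular band of groups that is a monoid, let G be its group of units, let J be the minimal two-sided ideal of S (the two-sided ideal contained in every two-sided ideal), let e ∈ J be an idempotent, and set I = S \ G. For x, x' ∈ J, write x ⌣ x' if x·e = x'·e and there exists w ∈ I \ J with x·w = x and x'·w = x'. Then: (a) for every g ∈ G, x ⌣ x' implies x·g ⌣ x'·g; (b) for every h ∈ e·J·e, x ⌣ x' implies h·x ⌣ h·x'. -/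
namespace RightRegularBandOfGroups

variable {S : Type*} [Monoid S]

/-- The relation `x ⌣ x'` of the statement, relative to the ideal `J` and the idempotent `e`. -/
def Adjacent (J : Set S) (e x x' : S) : Prop :=
  x * e = x' * e ∧ ∃ w : S, ¬ IsUnit w ∧ w ∉ J ∧ x * w = x ∧ x' * w = x'

theorem mul_right_mul_eq_of_mul_eq {e x x' : S} (hcomm : ∀ t : S, e * t * e = t * e)
    (h : x * e = x' * e) (t : S) : x * t * e = x' * t * e :=
  calc x * t * e = x * e * (t * e) := by rw [mul_assoc x e, ← mul_assoc e, hcomm, mul_assoc]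
    _ = x' * e * (t * e) := by rw [h]
    _ = x' * t * e := by rw [mul_assoc x' e, ← mul_assoc e, hcomm, mul_assoc]

theorem not_mem_of_units_conj {J : Set S} (hJideal : ∀ a ∈ J, ∀ s : S, a * s ∈ J ∧ s * a ∈ J)
    (u : Sˣ) {w : S} (hw : w ∉ J) : ↑u⁻¹ * w * ↑u ∉ J := by
  intro hconj
  have hmem := (hJideal _ (hJideal _ hconj ↑u⁻¹).1 ↑u).2
  simp only [mul_assoc, Units.mul_inv, mul_one, Units.mul_inv_cancel_left] at hmem
  exact hw hmem

namespace Adjacent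

variable {J : Set S} {e x x' : S}

theorem mul_left (hrel : Adjacent J e x x') (h : S) : Adjacent J e (h * x) (h * x') := by
  obtain ⟨hxe, w, hwu, hwJ, hxw, hx'w⟩ := hrel
  refine ⟨by rw [mul_assoc, mul_assoc, hxe], w, hwu, hwJ, ?_, ?_⟩
  · rw [mul_assoc, hxw]
  · rw [mul_assoc, hx'w]

theorem mul_isUnit (hcomm : ∀ t : S, e * t * e = t * e)
    (hJideal : ∀ a ∈ J, ∀ s : S, a * s ∈ J ∧ s * a ∈ J)
    (hrel : Adjacent J e x x') {g : S} (hg : IsUnit g) : Adjacent J e (x * g) (x' * g) := by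
  obtain ⟨hxe, w, hwu, hwJ, hxw, hx'w⟩ := hrel
  obtain ⟨u, rfl⟩ := hg
  have hfix : ∀ y : S, y * w = y → y * u * (↑u⁻¹ * w * u) = y * u := fun y hy =>
    calc y * u * (↑u⁻¹ * w * u) = y * w * u := by simp only [mul_assoc, Units.mul_inv_cancel_left]
      _ = y * u := by rw [hy]
  refine ⟨mul_right_mul_eq_of_mul_eq hcomm hxe u, ↑u⁻¹ * w * u, ?_,
    not_mem_of_units_conj hJideal u hwJ, hfix x hxw, hfix x' hx'w⟩
  rwa [Units.isUnit_mul_units, Units.isUnit_units_mul]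

end Adjacent

end RightRegularBandOfGroups

open RightRegularBandOfGroups in
theorem stmt18_general (S : Type*) [Monoid S]
    (h2 : ∀ e : S, e * e = e → ∀ t : S, e * t * e = t * e)
    (J : Set S)
    (hJideal : ∀ a ∈ J, ∀ s : S, a * s ∈ J ∧ s * a ∈ J)
    (e : S) (he : e * e = e)
    (x x' : S)
    (hrel : x * e = x' * e ∧
      ∃ w : S, ¬ IsUnit w ∧ w ∉ J ∧ x * w = x ∧ x' * w = x') :
    (∀ g : S, IsUnit g →
      (x * g) * e = (x' * g) * e ∧
        ∃ w : S, ¬ IsUnit w ∧ w ∉ J ∧ (x * g) * w = x * g ∧ (x' * g) * w = x' * g) ∧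
    (∀ h : S, (∃ j ∈ J, h = e * j * e) →
      (h * x) * e = (h * x') * e ∧
        ∃ w : S, ¬ IsUnit w ∧ w ∉ J ∧ (h * x) * w = h * x ∧ (h * x') * w = h * x') :=
  have hadj : Adjacent J e x x' := hrel
  ⟨fun _ hg => hadj.mul_isUnit (h2 e he) hJideal hg, fun h _ => hadj.mul_left h⟩

/-- let `S` be a right regular band of groups which is a monoid, `G` its
group of units, `J` the minimal two-sided ideal, `e ∈ J` an idempotent and `I = S \ G`.
If `x ⌣ x'` (i.e. `x·e = x'·e` and `x·w = x`, `x'·w = x'` for some `w ∈ I \ J`), then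
`x·g ⌣ x'·g` for all `g ∈ G` and `h·x ⌣ h·x'` for all `h ∈ e·J·e`. -/
theorem stmt18 (S : Type*) [Monoid S] [Finite S]
    (h1 : ∀ s : S, ∀ n : ℕ, spow s n * spow s n = spow s n → spow s n * s = s)
    (h2 : ∀ e : S, e * e = e → ∀ t : S, e * t * e = t * e)
    (J : Set S) (hJne : J.Nonempty)
    (hJideal : ∀ a ∈ J, ∀ s : S, a * s ∈ J ∧ s * a ∈ J)
    (hJmin : ∀ I : Set S, I.Nonempty → (∀ a ∈ I, ∀ s : S, a * s ∈ I ∧ s * a ∈ I) → J ⊆ I)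
    (e : S) (heJ : e ∈ J) (he : e * e = e)
    (x x' : S) (hx : x ∈ J) (hx' : x' ∈ J)
    (hrel : x * e = x' * e ∧
      ∃ w : S, ¬ IsUnit w ∧ w ∉ J ∧ x * w = x ∧ x' * w = x') :
    (∀ g : S, IsUnit g →
      (x * g) * e = (x' * g) * e ∧
        ∃ w : S, ¬ IsUnit w ∧ w ∉ J ∧ (x * g) * w = x * g ∧ (x' * g) * w = x' * g) ∧
    (∀ h : S, (∃ j ∈ J, h = e * j * e) →
      (h * x) * e = (h * x') * e ∧
        ∃ w : S, ¬ IsUnit w ∧ w ∉ J ∧ (h * x) * w = h * x ∧ (h * x') * w = h * x') :=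
  stmt18_general S h2 J hJideal e he x x' hrel
end
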